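/- arXiv:2512.21986 — 7 statements merged into one kernel-verified Lean document; each statement's English description precedes it below -/
import Mathlib

section
/- Let p ∈ [1,∞) and α, β ∈ P_p(ℝ^{d+1}). The function T_p : [0,1] → ℝ defined by T_p(w) = min_{π ∈ Π(α,β)} ∫ d_{p,w}(z,z')^p dπ(z,z') is upper semicontinuous on [0,1]; consequently there exist w* ∈ [0,1] and a coupling π* ∈ Π(α,β) attaining the value D_p(α,β)^p = max_{w ∈ [0,1]} min_{π ∈ Π(α,β)} ∫ d_{p,w}(z,z')^p dπ(z,z'), i.e. the Time-integrated Optimal Transport problem admits an optimal solution (w*, π*). -/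
open MeasureTheory Filter Topology

noncomputable section

/-- The space `ℝ^{d+1} = ℝ^d × ℝ`, with last coordinate representing time. -/
abbrev Zsp (d : ℕ) : Type := (Fin d → ℝ) × ℝ

/-- The pseudometric `d_{p,w}((x,t),(y,s)) = (w‖x−y‖_p^p + (1−w)|t−s|^p)^{1/p}`. -/
def dpw {d : ℕ} (p w : ℝ) (z z' : Zsp d) : ℝ :=
  (w * (∑ i, |z.1 i - z'.1 i| ^ p) + (1 - w) * |z.2 - z'.2| ^ p) ^ (1 / p)

/-- The metric `d_p((x,t),(y,s)) = (‖x−y‖_p^p + |t−s|^p)^{1/p}`. -/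
def dPmet {d : ℕ} (p : ℝ) (z z' : Zsp d) : ℝ :=
  ((∑ i, |z.1 i - z'.1 i| ^ p) + |z.2 - z'.2| ^ p) ^ (1 / p)

/-- `μ ∈ P_p(ℝ^{d+1})`: a Borel probability measure with finite `p`-th moment w.r.t. `d_p`. -/
def MemPp {d : ℕ} (p : ℝ) (μ : Measure (Zsp d)) : Prop :=
  IsProbabilityMeasure μ ∧ ∀ z0 : Zsp d, Integrable (fun z => dPmet p z0 z ^ p) μ

/-- `π ∈ Π(α,β)`: a coupling of `α` and `β`. -/
def IsCoupling {d : ℕ} (π : Measure (Zsp d × Zsp d)) (α β : Measure (Zsp d)) : Prop :=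
  IsProbabilityMeasure π ∧ π.map Prod.fst = α ∧ π.map Prod.snd = β

/-- `W_{p,w}(α,β) = (inf_{π ∈ Π(α,β)} ∫ d_{p,w}(z,z')^p dπ)^{1/p}`. -/
def Wpw {d : ℕ} (p w : ℝ) (α β : Measure (Zsp d)) : ℝ :=
  sInf {r : ℝ | ∃ π : Measure (Zsp d × Zsp d), IsCoupling π α β ∧
    r = ∫ z, dpw p w z.1 z.2 ^ p ∂π} ^ (1 / p)

/-- `W_p(α,β)`: the `p`-Wasserstein distance w.r.t. `d_p`. -/
def Wp {d : ℕ} (p : ℝ) (α β : Measure (Zsp d)) : ℝ :=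
  sInf {r : ℝ | ∃ π : Measure (Zsp d × Zsp d), IsCoupling π α β ∧
    r = ∫ z, dPmet p z.1 z.2 ^ p ∂π} ^ (1 / p)

/-- The Time-integrated Optimal Transport distance `D_p(α,β) = sup_{w ∈ [0,1]} W_{p,w}(α,β)`. -/
def Dp {d : ℕ} (p : ℝ) (α β : Measure (Zsp d)) : ℝ :=
  sSup {r : ℝ | ∃ w ∈ Set.Icc (0 : ℝ) 1, r = Wpw p w α β}

/-- Weak convergence in `P_p(ℝ^{d+1})`. -/
def WeakConvPp {d : ℕ} (p : ℝ) (μs : ℕ → Measure (Zsp d)) (μ : Measure (Zsp d)) : Prop :=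
  (∀ φ : BoundedContinuousFunction (Zsp d) ℝ,
      Tendsto (fun k => ∫ z, φ z ∂(μs k)) atTop (𝓝 (∫ z, φ z ∂μ))) ∧
  (∀ z0 : Zsp d,
      Tendsto (fun k => ∫ z, dPmet p z0 z ^ p ∂(μs k)) atTop
        (𝓝 (∫ z, dPmet p z0 z ^ p ∂μ)))


namespace TiOTaux

open Set

variable {d : ℕ}

/-- spatial part of the cost -/
noncomputable def Sfn (d : ℕ) (p : ℝ) : Zsp d × Zsp d → ℝ :=
  fun z => ∑ i, |z.1.1 i - z.2.1 i| ^ p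

/-- temporal part of the cost -/
noncomputable def Tfn (d : ℕ) (p : ℝ) : Zsp d × Zsp d → ℝ :=
  fun z => |z.1.2 - z.2.2| ^ p

noncomputable def Gfn (d : ℕ) (p : ℝ) : Zsp d → ℝ :=
  fun z => (∑ i, |z.1 i| ^ p) + |z.2| ^ p

lemma Sfn_nonneg (p : ℝ) (z : Zsp d × Zsp d) : 0 ≤ Sfn d p z :=
  Finset.sum_nonneg fun _ _ => Real.rpow_nonneg (abs_nonneg _) _

lemma Tfn_nonneg (p : ℝ) (z : Zsp d × Zsp d) : 0 ≤ Tfn d p z :=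
  Real.rpow_nonneg (abs_nonneg _) _

lemma Gfn_nonneg (p : ℝ) (z : Zsp d) : 0 ≤ Gfn d p z :=
  add_nonneg (Finset.sum_nonneg fun _ _ => Real.rpow_nonneg (abs_nonneg _) _)
    (Real.rpow_nonneg (abs_nonneg _) _)

lemma dpw_pow {p : ℝ} (hp : 1 ≤ p) {w : ℝ} (hw : w ∈ Set.Icc (0:ℝ) 1) (z : Zsp d × Zsp d) :
    dpw p w z.1 z.2 ^ p = w * Sfn d p z + (1 - w) * Tfn d p z := by
  have hb : 0 ≤ w * Sfn d p z + (1 - w) * Tfn d p z :=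
    add_nonneg (mul_nonneg hw.1 (Sfn_nonneg p z))
      (mul_nonneg (by linarith [hw.2]) (Tfn_nonneg p z))
  simp only [dpw, Sfn, Tfn] at hb ⊢
  rw [one_div]
  exact Real.rpow_inv_rpow hb (by linarith)

lemma base_nonneg {p : ℝ} (hp : 1 ≤ p) {w : ℝ} (hw : w ∈ Set.Icc (0:ℝ) 1)
    (z : Zsp d × Zsp d) : 0 ≤ dpw p w z.1 z.2 ^ p := by
  rw [dpw_pow hp hw]
  exact add_nonneg (mul_nonneg hw.1 (Sfn_nonneg p z))
    (mul_nonneg (by linarith [hw.2]) (Tfn_nonneg p z))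

lemma dPmet_zero_pow {p : ℝ} (hp : 1 ≤ p) (z : Zsp d) :
    dPmet p 0 z ^ p = Gfn d p z := by
  have hb : 0 ≤ (∑ i, |z.1 i| ^ p) + |z.2| ^ p :=
    add_nonneg (Finset.sum_nonneg fun _ _ => Real.rpow_nonneg (abs_nonneg _) _)
      (Real.rpow_nonneg (abs_nonneg _) _)
  simp only [dPmet, Gfn, Prod.fst_zero, Prod.snd_zero, Pi.zero_apply, zero_sub, abs_neg]
  rw [one_div]
  exact Real.rpow_inv_rpow hb (by linarith)

lemma cont_abs_rpow {p : ℝ} (hp : 1 ≤ p) : Continuous fun x : ℝ => |x| ^ p :=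
  continuous_abs.rpow_const fun _ => Or.inr (by linarith)

lemma Sfn_cont {p : ℝ} (hp : 1 ≤ p) : Continuous (Sfn d p) := by
  refine continuous_finset_sum _ fun i _ => (cont_abs_rpow hp).comp ?_
  exact ((continuous_apply i).comp continuous_fst.fst).sub
    ((continuous_apply i).comp continuous_snd.fst)

lemma Tfn_cont {p : ℝ} (hp : 1 ≤ p) : Continuous (Tfn d p) :=
  (cont_abs_rpow hp).comp (continuous_fst.snd.sub continuous_snd.snd)

lemma Gfn_cont {p : ℝ} (hp : 1 ≤ p) : Continuous (Gfn d p) := by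
  refine Continuous.add (continuous_finset_sum _ fun i _ => (cont_abs_rpow hp).comp ?_)
    ((cont_abs_rpow hp).comp continuous_snd)
  exact (continuous_apply i).comp continuous_fst

lemma keybound {p : ℝ} (hp : 1 ≤ p) (a b : ℝ) :
    |a - b| ^ p ≤ 2 ^ p * (|a| ^ p + |b| ^ p) := by
  have h0 : (0:ℝ) ≤ p := by linarith
  have h1 : |a - b| ≤ |a| + |b| := by
    have := abs_add_le a (-b); simpa [sub_eq_add_neg] using this
  have h2 : |a| + |b| ≤ 2 * max |a| |b| := by
    have := le_max_left |a| |b|; have := le_max_right |a| |b|; linarith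
  calc |a - b| ^ p ≤ (2 * max |a| |b|) ^ p :=
        Real.rpow_le_rpow (abs_nonneg _) (h1.trans h2) h0
    _ = 2 ^ p * (max |a| |b|) ^ p :=
        Real.mul_rpow (by norm_num) (le_max_of_le_left (abs_nonneg a))
    _ ≤ 2 ^ p * (|a| ^ p + |b| ^ p) := by
        refine mul_le_mul_of_nonneg_left ?_ (Real.rpow_nonneg (by norm_num) p)
        rcases max_cases |a| |b| with ⟨h, _⟩ | ⟨h, _⟩ <;> rw [h]
        · exact le_add_of_nonneg_right (Real.rpow_nonneg (abs_nonneg b) p)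
        · exact le_add_of_nonneg_left (Real.rpow_nonneg (abs_nonneg a) p)

lemma coupling_integrable {p : ℝ} (hp : 1 ≤ p) {α β : Measure (Zsp d)}
    (hα : MemPp p α) (hβ : MemPp p β) {π : Measure (Zsp d × Zsp d)}
    (hπ : IsCoupling π α β) :
    Integrable (Sfn d p) π ∧ Integrable (Tfn d p) π := by
  have hGα : Integrable (Gfn d p) α :=
    (hα.2 0).congr (Filter.Eventually.of_forall fun z => dPmet_zero_pow hp z)
  have hGβ : Integrable (Gfn d p) β :=
    (hβ.2 0).congr (Filter.Eventually.of_forall fun z => dPmet_zero_pow hp z)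
  have h1 : Integrable (fun z : Zsp d × Zsp d => Gfn d p z.1) π := by
    have hm : Integrable (Gfn d p) (π.map Prod.fst) := by rw [hπ.2.1]; exact hGα
    exact (integrable_map_measure (Gfn_cont hp).aestronglyMeasurable
      measurable_fst.aemeasurable).mp hm
  have h2 : Integrable (fun z : Zsp d × Zsp d => Gfn d p z.2) π := by
    have hm : Integrable (Gfn d p) (π.map Prod.snd) := by rw [hπ.2.2]; exact hGβ
    exact (integrable_map_measure (Gfn_cont hp).aestronglyMeasurable
      measurable_snd.aemeasurable).mp hm
  have hdom : Integrable (fun z : Zsp d × Zsp d => 2 ^ p * (Gfn d p z.1 + Gfn d p z.2)) π :=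
    (h1.add h2).const_mul _
  have h2p : (0:ℝ) ≤ 2 ^ p := Real.rpow_nonneg (by norm_num) p
  constructor
  · refine hdom.mono' (Sfn_cont hp).aestronglyMeasurable
      (Filter.Eventually.of_forall fun z => ?_)
    rw [Real.norm_eq_abs, abs_of_nonneg (Sfn_nonneg p z)]
    have hb : Sfn d p z ≤ ∑ i, 2 ^ p * (|z.1.1 i| ^ p + |z.2.1 i| ^ p) :=
      Finset.sum_le_sum fun i _ => keybound hp _ _
    have he : ∑ i, 2 ^ p * (|z.1.1 i| ^ p + |z.2.1 i| ^ p)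
        = 2 ^ p * ((∑ i, |z.1.1 i| ^ p) + ∑ i, |z.2.1 i| ^ p) := by
      rw [← Finset.mul_sum, Finset.sum_add_distrib]
    have h3 : (∑ i, |z.1.1 i| ^ p) + ∑ i, |z.2.1 i| ^ p ≤ Gfn d p z.1 + Gfn d p z.2 := by
      simp only [Gfn]
      have := Real.rpow_nonneg (abs_nonneg z.1.2) p
      have := Real.rpow_nonneg (abs_nonneg z.2.2) p
      linarith
    calc Sfn d p z ≤ 2 ^ p * ((∑ i, |z.1.1 i| ^ p) + ∑ i, |z.2.1 i| ^ p) := he ▸ hb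
      _ ≤ 2 ^ p * (Gfn d p z.1 + Gfn d p z.2) := mul_le_mul_of_nonneg_left h3 h2p
  · refine hdom.mono' (Tfn_cont hp).aestronglyMeasurable
      (Filter.Eventually.of_forall fun z => ?_)
    rw [Real.norm_eq_abs, abs_of_nonneg (Tfn_nonneg p z)]
    have hb : Tfn d p z ≤ 2 ^ p * (|z.1.2| ^ p + |z.2.2| ^ p) := keybound hp _ _
    have h3 : |z.1.2| ^ p + |z.2.2| ^ p ≤ Gfn d p z.1 + Gfn d p z.2 := by
      simp only [Gfn]
      have := Finset.sum_nonneg fun i (_ : i ∈ Finset.univ) =>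
        Real.rpow_nonneg (abs_nonneg (z.1.1 i)) p
      have := Finset.sum_nonneg fun i (_ : i ∈ Finset.univ) =>
        Real.rpow_nonneg (abs_nonneg (z.2.1 i)) p
      linarith
    exact hb.trans (mul_le_mul_of_nonneg_left h3 h2p)

lemma integral_dpw {p : ℝ} (hp : 1 ≤ p) {α β : Measure (Zsp d)}
    (hα : MemPp p α) (hβ : MemPp p β) {π : Measure (Zsp d × Zsp d)}
    (hπ : IsCoupling π α β) {w : ℝ} (hw : w ∈ Set.Icc (0:ℝ) 1) :
    ∫ z, dpw p w z.1 z.2 ^ p ∂π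
      = w * (∫ z, Sfn d p z ∂π) + (1 - w) * ∫ z, Tfn d p z ∂π := by
  obtain ⟨hS, hT⟩ := coupling_integrable hp hα hβ hπ
  calc ∫ z, dpw p w z.1 z.2 ^ p ∂π
      = ∫ z, (w * Sfn d p z + (1 - w) * Tfn d p z) ∂π :=
        integral_congr_ae (Filter.Eventually.of_forall fun z => dpw_pow hp hw z)
    _ = w * (∫ z, Sfn d p z ∂π) + (1 - w) * ∫ z, Tfn d p z ∂π := by
        rw [integral_add (hS.const_mul w) (hT.const_mul (1 - w)),
          integral_const_mul, integral_const_mul]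

end TiOTaux

/-- The inner value `T_p(w) = min_{π ∈ Π(α,β)} ∫ d_{p,w}^p dπ` is upper
semicontinuous on `[0,1]`; consequently the TiOT problem admits an optimal solution
`(w*, π*)` attaining `D_p(α,β)^p`. -/
theorem TiOT_exists_optimal {d : ℕ} (hd : 1 ≤ d) (p : ℝ) (hp : 1 ≤ p)
    (α β : Measure (Zsp d)) (hα : MemPp p α) (hβ : MemPp p β)
    (hmin : ∀ w ∈ Set.Icc (0 : ℝ) 1, ∃ π : Measure (Zsp d × Zsp d), IsCoupling π α β ∧
      ∀ π' : Measure (Zsp d × Zsp d), IsCoupling π' α β →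
        ∫ z, dpw p w z.1 z.2 ^ p ∂π ≤ ∫ z, dpw p w z.1 z.2 ^ p ∂π') :
    UpperSemicontinuousOn
      (fun w => sInf {r : ℝ | ∃ π : Measure (Zsp d × Zsp d), IsCoupling π α β ∧
        r = ∫ z, dpw p w z.1 z.2 ^ p ∂π}) (Set.Icc (0 : ℝ) 1) ∧
    ∃ wstar ∈ Set.Icc (0 : ℝ) 1, ∃ πstar : Measure (Zsp d × Zsp d),
      IsCoupling πstar α β ∧
      (∀ π : Measure (Zsp d × Zsp d), IsCoupling π α β →
        ∫ z, dpw p wstar z.1 z.2 ^ p ∂πstar ≤ ∫ z, dpw p wstar z.1 z.2 ^ p ∂π) ∧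
      (∀ w ∈ Set.Icc (0 : ℝ) 1,
        sInf {r : ℝ | ∃ π : Measure (Zsp d × Zsp d), IsCoupling π α β ∧
          r = ∫ z, dpw p w z.1 z.2 ^ p ∂π} ≤ ∫ z, dpw p wstar z.1 z.2 ^ p ∂πstar) ∧
      Dp p α β ^ p = ∫ z, dpw p wstar z.1 z.2 ^ p ∂πstar := by
  classical
  open TiOTaux in
  have hp0 : (0:ℝ) < p := lt_of_lt_of_le one_pos hp
  set f : ℝ → ℝ := fun w => sInf {r : ℝ | ∃ π : Measure (Zsp d × Zsp d), IsCoupling π α β ∧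
    r = ∫ z, dpw p w z.1 z.2 ^ p ∂π} with hfdef
  have hmemset : ∀ (w : ℝ) (π : Measure (Zsp d × Zsp d)), IsCoupling π α β →
      (∫ z, dpw p w z.1 z.2 ^ p ∂π) ∈ {r : ℝ | ∃ π : Measure (Zsp d × Zsp d),
        IsCoupling π α β ∧ r = ∫ z, dpw p w z.1 z.2 ^ p ∂π} :=
    fun w π hπ => ⟨π, hπ, rfl⟩
  have hel_nonneg : ∀ w ∈ Set.Icc (0:ℝ) 1, ∀ r ∈ {r : ℝ | ∃ π : Measure (Zsp d × Zsp d),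
      IsCoupling π α β ∧ r = ∫ z, dpw p w z.1 z.2 ^ p ∂π}, (0:ℝ) ≤ r := by
    rintro w hw r ⟨π, hπ, rfl⟩
    exact integral_nonneg fun z => TiOTaux.base_nonneg hp hw z
  have hbdd : ∀ w ∈ Set.Icc (0:ℝ) 1, BddBelow {r : ℝ | ∃ π : Measure (Zsp d × Zsp d),
      IsCoupling π α β ∧ r = ∫ z, dpw p w z.1 z.2 ^ p ∂π} :=
    fun w hw => ⟨0, fun r hr => hel_nonneg w hw r hr⟩
  have hle : ∀ w ∈ Set.Icc (0:ℝ) 1, ∀ π : Measure (Zsp d × Zsp d), IsCoupling π α β →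
      f w ≤ ∫ z, dpw p w z.1 z.2 ^ p ∂π :=
    fun w hw π hπ => csInf_le (hbdd w hw) (hmemset w π hπ)
  have hfeq : ∀ w ∈ Set.Icc (0:ℝ) 1, ∀ π : Measure (Zsp d × Zsp d), IsCoupling π α β →
      (∀ π' : Measure (Zsp d × Zsp d), IsCoupling π' α β →
        ∫ z, dpw p w z.1 z.2 ^ p ∂π ≤ ∫ z, dpw p w z.1 z.2 ^ p ∂π') →
      f w = ∫ z, dpw p w z.1 z.2 ^ p ∂π := by
    intro w hw π hπ hopt
    refine le_antisymm (hle w hw π hπ) (le_csInf ⟨_, hmemset w π hπ⟩ ?_)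
    rintro r ⟨π', hπ', rfl⟩
    exact hopt π' hπ'
  have hf_nonneg : ∀ w ∈ Set.Icc (0:ℝ) 1, 0 ≤ f w := by
    intro w hw
    obtain ⟨π0, hπ0, -⟩ := hmin w hw
    exact le_csInf ⟨_, hmemset w π0 hπ0⟩ fun r hr => hel_nonneg w hw r hr
  -- upper semicontinuity
  have husc : UpperSemicontinuousOn f (Set.Icc (0:ℝ) 1) := by
    intro w0 hw0 y hy
    obtain ⟨π0, hc0, hopt0⟩ := hmin w0 hw0
    set A := ∫ z, TiOTaux.Sfn d p z ∂π0 with hA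
    set B := ∫ z, TiOTaux.Tfn d p z ∂π0 with hB
    have hlin : ∀ w ∈ Set.Icc (0:ℝ) 1,
        ∫ z, dpw p w z.1 z.2 ^ p ∂π0 = w * A + (1 - w) * B :=
      fun w hw => TiOTaux.integral_dpw hp hα hβ hc0 hw
    have heq0 : w0 * A + (1 - w0) * B < y := by
      rw [← hlin w0 hw0, ← hfeq w0 hw0 π0 hc0 hopt0]; exact hy
    have hccont : Continuous fun w : ℝ => w * A + (1 - w) * B := by
      exact (continuous_id.mul continuous_const).add
        ((continuous_const.sub continuous_id).mul continuous_const)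
    have hnhds : {w : ℝ | w * A + (1 - w) * B < y} ∈ 𝓝 w0 :=
      (isOpen_lt hccont continuous_const).mem_nhds heq0
    filter_upwards [nhdsWithin_le_nhds hnhds, self_mem_nhdsWithin] with w hw hwIcc
    calc f w ≤ ∫ z, dpw p w z.1 z.2 ^ p ∂π0 := hle w hwIcc π0 hc0
      _ = w * A + (1 - w) * B := hlin w hwIcc
      _ < y := hw
  -- boundedness above and maximum
  have h01 : (0:ℝ) ∈ Set.Icc (0:ℝ) 1 := ⟨le_refl 0, zero_le_one⟩
  have hne : (f '' Set.Icc (0:ℝ) 1).Nonempty := ⟨f 0, 0, h01, rfl⟩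
  have hub : BddAbove (f '' Set.Icc (0:ℝ) 1) := by
    obtain ⟨π1, hc1, -⟩ := hmin 0 h01
    set A := ∫ z, TiOTaux.Sfn d p z ∂π1 with hA
    set B := ∫ z, TiOTaux.Tfn d p z ∂π1 with hB
    have hA0 : 0 ≤ A := integral_nonneg fun z => TiOTaux.Sfn_nonneg p z
    have hB0 : 0 ≤ B := integral_nonneg fun z => TiOTaux.Tfn_nonneg p z
    refine ⟨A + B, ?_⟩
    rintro r ⟨w, hw, rfl⟩
    have h1 : f w ≤ w * A + (1 - w) * B := by
      rw [← TiOTaux.integral_dpw hp hα hβ hc1 hw]; exact hle w hw π1 hc1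
    nlinarith [hw.1, hw.2]
  set c := sSup (f '' Set.Icc (0:ℝ) 1) with hc
  obtain ⟨u, -, hu_tend, hu_mem⟩ := exists_seq_tendsto_sSup hne hub
  choose wseq hwmem hwval using hu_mem
  obtain ⟨wstar, hwstar, φ, hφ, hconv⟩ := isCompact_Icc.tendsto_subseq hwmem
  have hfwle : ∀ w ∈ Set.Icc (0:ℝ) 1, f w ≤ c := fun w hw => le_csSup hub ⟨w, hw, rfl⟩
  have hcmax : f wstar = c := by
    refine le_antisymm (hfwle wstar hwstar) ?_
    by_contra hlt
    push_neg at hlt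
    obtain ⟨y, hy1, hy2⟩ := exists_between hlt
    have hev := husc wstar hwstar y hy1
    have htend : Tendsto (fun n => wseq (φ n)) atTop (𝓝[Set.Icc (0:ℝ) 1] wstar) :=
      tendsto_nhdsWithin_of_tendsto_nhds_of_eventually_within _ hconv
        (Filter.Eventually.of_forall fun n => hwmem (φ n))
    have h1 : ∀ᶠ n in atTop, f (wseq (φ n)) < y := htend.eventually hev
    have h2 : Tendsto (fun n => f (wseq (φ n))) atTop (𝓝 c) := by
      have heq : (fun n => f (wseq (φ n))) = u ∘ φ := funext fun n => hwval (φ n)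
      rw [heq]
      exact hu_tend.comp hφ.tendsto_atTop
    have := le_of_tendsto h2 (h1.mono fun n h => le_of_lt h)
    linarith
  obtain ⟨πstar, hcst, hoptst⟩ := hmin wstar hwstar
  have hvstar : f wstar = ∫ z, dpw p wstar z.1 z.2 ^ p ∂πstar :=
    hfeq wstar hwstar πstar hcst hoptst
  refine ⟨husc, wstar, hwstar, πstar, hcst, hoptst, ?_, ?_⟩
  · intro w hw
    calc f w ≤ c := hfwle w hw
      _ = f wstar := hcmax.symm
      _ = _ := hvstar
  · have hWpw : ∀ w : ℝ, Wpw p w α β = f w ^ (1 / p) := fun w => rfl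
    have hgreat : IsGreatest {r : ℝ | ∃ w ∈ Set.Icc (0:ℝ) 1, r = Wpw p w α β}
        (f wstar ^ (1 / p)) := by
      constructor
      · exact ⟨wstar, hwstar, (hWpw wstar).symm⟩
      · rintro r ⟨w, hw, rfl⟩
        rw [hWpw]
        refine Real.rpow_le_rpow (hf_nonneg w hw) ?_ (by positivity)
        calc f w ≤ c := hfwle w hw
          _ = f wstar := hcmax.symm
    rw [Dp, hgreat.csSup_eq, one_div,
      Real.rpow_inv_rpow (hf_nonneg wstar hwstar) (ne_of_gt hp0)]
    exact hvstar
end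
end

section
/- Let (ε_k)_{k∈ℕ} be a sequence of positive reals with ε_k → 0, and for each k let (w_k, π_k) be an optimal solution of the entropic regularized discrete TiOT problem with parameter ε_k, i.e. w_k maximizes over w ∈ [0,1] the value min_{π ∈ Π(a,b)} ⟨C(w), π⟩ + ε_k KL(π | a b^⊤) and π_k is the corresponding inner minimizer at w_k. Then there exists a subsequence of (w_k, π_k) converging to a point of the optimal solution set S* of the unregularized discrete TiOT problem max_{w ∈ [0,1]} min_{π ∈ Π(a,b)} ⟨C(w), π⟩. -/
open Finset Filter Topology

noncomputable section

/-- Cost matrix `C(w)_{ij} = w‖x_i − y_j‖_p^p + (1−w)|t_i − s_j|^p`. -/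
def costM {d m n : ℕ} (p : ℝ) (x : Fin m → Fin d → ℝ) (t : Fin m → ℝ)
    (y : Fin n → Fin d → ℝ) (s : Fin n → ℝ) (w : ℝ) : Matrix (Fin m) (Fin n) ℝ :=
  fun i j => w * (∑ l, |x i l - y j l| ^ p) + (1 - w) * |t i - s j| ^ p

/-- The transport polytope `Π(a,b)`. -/
def transportPolytope {m n : ℕ} (a : Fin m → ℝ) (b : Fin n → ℝ) :
    Set (Matrix (Fin m) (Fin n) ℝ) :=
  {π | (∀ i j, 0 ≤ π i j) ∧ (∀ i, ∑ j, π i j = a i) ∧ (∀ j, ∑ i, π i j = b j)}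

/-- Frobenius pairing `⟨C, π⟩ = Σ_{i,j} C_{ij} π_{ij}`. -/
def ip {m n : ℕ} (C π : Matrix (Fin m) (Fin n) ℝ) : ℝ := ∑ i, ∑ j, C i j * π i j

/-- `KL(π | γ) = Σ_{i,j} (π_{ij} log(π_{ij}/γ_{ij}) − π_{ij} + γ_{ij})` (with `0 log 0 = 0`). -/
def KLdiv {m n : ℕ} (π γ : Matrix (Fin m) (Fin n) ℝ) : ℝ :=
  ∑ i, ∑ j, (π i j * Real.log (π i j / γ i j) - π i j + γ i j)

lemma kl_term_nonneg (u g : ℝ) (hu : 0 ≤ u) (hg : 0 < g) :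
    0 ≤ u * Real.log (u / g) - u + g := by
  rcases eq_or_lt_of_le hu with h | h
  · simp [← h, hg.le]
  · have hx : 0 < g / u := div_pos hg h
    have hlog : Real.log (u / g) = - Real.log (g / u) := by
      rw [← Real.log_inv, inv_div]
    rw [hlog]
    have h1 : Real.log (g / u) ≤ g / u - 1 := Real.log_le_sub_one_of_pos hx
    have h2 : u * (g / u - 1) = g - u := by field_simp
    nlinarith [mul_le_mul_of_nonneg_left h1 h.le]

lemma kl_term_le (u g : ℝ) (hu0 : 0 ≤ u) (hu1 : u ≤ 1) (hg0 : 0 < g) (hg1 : g ≤ 1) :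
    u * Real.log (u / g) - u + g ≤ 1 - Real.log g := by
  have hlogg : Real.log g ≤ 0 := Real.log_nonpos hg0.le hg1
  rcases eq_or_lt_of_le hu0 with h | h
  · simp [← h]; linarith
  · rw [Real.log_div h.ne' hg0.ne']
    have hlu : Real.log u ≤ 0 := Real.log_nonpos h.le hu1
    nlinarith [mul_nonpos_of_nonneg_of_nonpos h.le hlu,
      mul_nonneg (sub_nonneg.2 hu1) (neg_nonneg.2 hlogg)]

instance matrixFirstCountable (m n : ℕ) :
    FirstCountableTopology (Matrix (Fin m) (Fin n) ℝ) :=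
  inferInstanceAs (FirstCountableTopology (Fin m → Fin n → ℝ))

lemma KLdiv_nonneg {m n : ℕ} {π γ : Matrix (Fin m) (Fin n) ℝ}
    (hπ : ∀ i j, 0 ≤ π i j) (hγ : ∀ i j, 0 < γ i j) : 0 ≤ KLdiv π γ :=
  Finset.sum_nonneg fun i _ => Finset.sum_nonneg fun j _ =>
    kl_term_nonneg _ _ (hπ i j) (hγ i j)

lemma ip_continuous {d m n : ℕ} (p : ℝ) (x : Fin m → Fin d → ℝ) (t : Fin m → ℝ)
    (y : Fin n → Fin d → ℝ) (s : Fin n → ℝ) :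
    Continuous fun v : ℝ × Matrix (Fin m) (Fin n) ℝ => ip (costM p x t y s v.1) v.2 := by
  unfold ip costM
  apply continuous_finset_sum; intro i _
  apply continuous_finset_sum; intro j _
  exact ((continuous_fst.mul continuous_const).add
    ((continuous_const.sub continuous_fst).mul continuous_const)).mul
    (continuous_snd.matrix_elem i j)

set_option maxHeartbeats 1000000 in
/-- If `ε_k → 0` and `(w_k, π_k)` is an optimal solution of the entropic
regularized discrete TiOT problem with parameter `ε_k`, then some subsequence of
`(w_k, π_k)` converges to a point of the optimal solution set `S*` of the unregularized
discrete TiOT problem. -/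
theorem eTiOT_convergence_eps_zero {d m n : ℕ} (hm : 1 ≤ m) (hn : 1 ≤ n) (p : ℝ) (hp : 1 ≤ p)
    (a : Fin m → ℝ) (b : Fin n → ℝ)
    (ha : ∀ i, 0 < a i) (ha1 : ∑ i, a i = 1) (hb : ∀ j, 0 < b j) (hb1 : ∑ j, b j = 1)
    (x : Fin m → Fin d → ℝ) (t : Fin m → ℝ) (y : Fin n → Fin d → ℝ) (s : Fin n → ℝ)
    (ε : ℕ → ℝ) (hε : ∀ k, 0 < ε k) (hε0 : Tendsto ε atTop (𝓝 0))
    (w : ℕ → ℝ) (π : ℕ → Matrix (Fin m) (Fin n) ℝ)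
    (hw : ∀ k, w k ∈ Set.Icc (0 : ℝ) 1)
    (hπmem : ∀ k, π k ∈ transportPolytope a b)
    (hπmin : ∀ k, ∀ π' ∈ transportPolytope a b,
      ip (costM p x t y s (w k)) (π k) + ε k * KLdiv (π k) (fun i j => a i * b j) ≤
        ip (costM p x t y s (w k)) π' + ε k * KLdiv π' (fun i j => a i * b j))
    (hwmax : ∀ k, ∀ w' ∈ Set.Icc (0 : ℝ) 1,
      sInf {r : ℝ | ∃ π' ∈ transportPolytope a b,
          r = ip (costM p x t y s w') π' + ε k * KLdiv π' (fun i j => a i * b j)} ≤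
        ip (costM p x t y s (w k)) (π k) + ε k * KLdiv (π k) (fun i j => a i * b j)) :
    ∃ φ : ℕ → ℕ, StrictMono φ ∧ ∃ (wstar : ℝ) (πstar : Matrix (Fin m) (Fin n) ℝ),
      -- `(wstar, πstar) ∈ S*`:
      (wstar ∈ Set.Icc (0 : ℝ) 1 ∧ πstar ∈ transportPolytope a b ∧
        (∀ π' ∈ transportPolytope a b,
          ip (costM p x t y s wstar) πstar ≤ ip (costM p x t y s wstar) π') ∧
        (∀ w' ∈ Set.Icc (0 : ℝ) 1, ∀ πw ∈ transportPolytope a b,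
          (∀ π' ∈ transportPolytope a b,
            ip (costM p x t y s w') πw ≤ ip (costM p x t y s w') π') →
          ip (costM p x t y s w') πw ≤ ip (costM p x t y s wstar) πstar)) ∧
      Tendsto (fun j => w (φ j)) atTop (𝓝 wstar) ∧
      Tendsto (fun j => π (φ j)) atTop (𝓝 πstar) := by
  classical
  set γ : Matrix (Fin m) (Fin n) ℝ := fun i j => a i * b j with hγdef
  have hγpos : ∀ i j, 0 < γ i j := fun i j => mul_pos (ha i) (hb j)
  have ha1' : ∀ i, a i ≤ 1 := by
    intro i
    calc a i ≤ ∑ i', a i' := Finset.single_le_sum (fun i' _ => (ha i').le) (mem_univ i)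
    _ = 1 := ha1
  have hb1' : ∀ j, b j ≤ 1 := by
    intro j
    calc b j ≤ ∑ j', b j' := Finset.single_le_sum (fun j' _ => (hb j').le) (mem_univ j)
    _ = 1 := hb1
  have hγ1 : ∀ i j, γ i j ≤ 1 := fun i j =>
    mul_le_one₀ (ha1' i) (hb j).le (hb1' j)
  -- entries of any element of the polytope are in [0,1]
  have hentry : ∀ π' ∈ transportPolytope a b, ∀ i j, π' i j ∈ Set.Icc (0:ℝ) 1 := by
    intro π' hπ' i j
    refine ⟨hπ'.1 i j, ?_⟩
    calc π' i j ≤ ∑ j', π' i j' :=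
          Finset.single_le_sum (fun j' _ => hπ'.1 i j') (mem_univ j)
    _ = a i := hπ'.2.1 i
    _ ≤ 1 := ha1' i
  -- KL bounded on the polytope
  set B : ℝ := ∑ i : Fin m, ∑ j : Fin n, (1 - Real.log (γ i j)) with hBdef
  have hKLle : ∀ π' ∈ transportPolytope a b, KLdiv π' γ ≤ B := by
    intro π' hπ'
    refine Finset.sum_le_sum fun i _ => Finset.sum_le_sum fun j _ => ?_
    exact kl_term_le _ _ (hentry π' hπ' i j).1 (hentry π' hπ' i j).2 (hγpos i j) (hγ1 i j)
  have hKL0 : ∀ π' ∈ transportPolytope a b, 0 ≤ KLdiv π' γ :=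
    fun π' hπ' => KLdiv_nonneg hπ'.1 hγpos
  -- compactness
  set K : Set (ℝ × Matrix (Fin m) (Fin n) ℝ) :=
    (Set.Icc (0:ℝ) 1) ×ˢ (Set.univ.pi fun _ : Fin m => Set.univ.pi fun _ : Fin n =>
      Set.Icc (0:ℝ) 1) with hKdef
  have hK : IsCompact K :=
    isCompact_Icc.prod (isCompact_univ_pi fun _ => isCompact_univ_pi fun _ => isCompact_Icc)
  have humem : ∀ k, (w k, π k) ∈ K := by
    intro k
    refine ⟨hw k, ?_⟩
    intro i _
    intro j _
    exact hentry (π k) (hπmem k) i j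
  obtain ⟨⟨wstar, πstar⟩, hmemK, φ, hφ, hconv⟩ := hK.tendsto_subseq humem
  refine ⟨φ, hφ, wstar, πstar, ?_⟩
  have hwt : Tendsto (fun j => w (φ j)) atTop (𝓝 wstar) :=
    (continuous_fst.tendsto _).comp hconv
  have hπt : Tendsto (fun j => π (φ j)) atTop (𝓝 πstar) :=
    (continuous_snd.tendsto _).comp hconv
  have hπij : ∀ i j, Tendsto (fun k => π (φ k) i j) atTop (𝓝 (πstar i j)) := by
    intro i j
    exact ((continuous_id.matrix_elem i j).tendsto _).comp hπt
  have hεφ : Tendsto (fun j => ε (φ j)) atTop (𝓝 0) := hε0.comp hφ.tendsto_atTop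
  -- ε_k * KL(π_k) → 0 along φ
  have hεKL : Tendsto (fun j => ε (φ j) * KLdiv (π (φ j)) γ) atTop (𝓝 0) := by
    have hub : Tendsto (fun j => ε (φ j) * B) atTop (𝓝 0) := by
      simpa using hεφ.mul_const B
    refine squeeze_zero (fun j => mul_nonneg (hε _).le (hKL0 _ (hπmem _))) (fun j => ?_) hub
    exact mul_le_mul_of_nonneg_left (hKLle _ (hπmem _)) (hε _).le
  have hcont := ip_continuous p x t y s
  -- value convergence
  have hval : Tendsto (fun j => ip (costM p x t y s (w (φ j))) (π (φ j))) atTop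
      (𝓝 (ip (costM p x t y s wstar) πstar)) := by
    have := (hcont.tendsto (wstar, πstar)).comp hconv
    exact this
  -- πstar ∈ polytope
  have hπstar : πstar ∈ transportPolytope a b := by
    refine ⟨fun i j => le_of_tendsto_of_tendsto' tendsto_const_nhds (hπij i j)
      (fun k => (hπmem (φ k)).1 i j), fun i => ?_, fun j => ?_⟩
    · have h1 : Tendsto (fun k => ∑ j, π (φ k) i j) atTop (𝓝 (∑ j, πstar i j)) :=
        tendsto_finset_sum _ fun j _ => hπij i j
      have h2 : (fun k => ∑ j, π (φ k) i j) = fun _ => a i := by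
        funext k; exact (hπmem (φ k)).2.1 i
      rw [h2] at h1
      exact tendsto_nhds_unique h1 tendsto_const_nhds
    · have h1 : Tendsto (fun k => ∑ i, π (φ k) i j) atTop (𝓝 (∑ i, πstar i j)) :=
        tendsto_finset_sum _ fun i _ => hπij i j
      have h2 : (fun k => ∑ i, π (φ k) i j) = fun _ => b j := by
        funext k; exact (hπmem (φ k)).2.2 j
      rw [h2] at h1
      exact tendsto_nhds_unique h1 tendsto_const_nhds
  refine ⟨⟨hmemK.1, hπstar, ?_, ?_⟩, hwt, hπt⟩
  · -- minimality of πstar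
    intro π' hπ'
    have hineq : ∀ j : ℕ, ip (costM p x t y s (w (φ j))) (π (φ j)) ≤
        ip (costM p x t y s (w (φ j))) π' + ε (φ j) * KLdiv π' γ := by
      intro j
      have h1 := hπmin (φ j) π' hπ'
      have h2 : 0 ≤ ε (φ j) * KLdiv (π (φ j)) γ :=
        mul_nonneg (hε _).le (hKL0 _ (hπmem _))
      linarith
    have hrhs : Tendsto (fun j => ip (costM p x t y s (w (φ j))) π' + ε (φ j) * KLdiv π' γ)
        atTop (𝓝 (ip (costM p x t y s wstar) π' + 0)) := by
      refine Tendsto.add ?_ (by simpa using hεφ.mul_const (KLdiv π' γ))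
      have := (hcont.tendsto (wstar, π')).comp (hwt.prodMk_nhds tendsto_const_nhds)
      exact this
    rw [add_zero] at hrhs
    exact le_of_tendsto_of_tendsto' hval hrhs hineq
  · -- maximality of wstar
    intro w' hw' πw hπw hπwmin
    have hineq : ∀ j : ℕ, ip (costM p x t y s w') πw ≤
        ip (costM p x t y s (w (φ j))) (π (φ j)) + ε (φ j) * KLdiv (π (φ j)) γ := by
      intro j
      refine le_trans ?_ (hwmax (φ j) w' hw')
      refine le_csInf ⟨_, πw, hπw, rfl⟩ ?_
      rintro r ⟨π', hπ', rfl⟩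
      have h2 : 0 ≤ ε (φ j) * KLdiv π' γ := mul_nonneg (hε _).le (hKL0 _ hπ')
      have h3 := hπwmin π' hπ'
      linarith
    have hrhs : Tendsto (fun j => ip (costM p x t y s (w (φ j))) (π (φ j)) +
        ε (φ j) * KLdiv (π (φ j)) γ) atTop (𝓝 (ip (costM p x t y s wstar) πstar + 0)) :=
      hval.add hεKL
    rw [add_zero] at hrhs
    exact le_of_tendsto_of_tendsto' tendsto_const_nhds hrhs hineq
end
end

section
/- Let (ε_k)_{k∈ℕ} be a sequence of positive reals with ε_k → ∞, and for each k let (w_k, π_k) be an optimal solution of the entropic regularized discrete TiOT problem with parameter ε_k, i.e. w_k maximizes over w ∈ [0,1] the value min_{π ∈ Π(a,b)} ⟨C(w), π⟩ + ε_k KL(π | a b^⊤) and π_k is the corresponding inner minimizer at w_k. Then the whole sequence of transport plans converges: π_k → a b^⊤ as k → ∞. -/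
open Finset Filter Topology

noncomputable section

lemma klterm_nonneg {u c : ℝ} (hu : 0 ≤ u) (hc : 0 < c) :
    0 ≤ u * Real.log (u / c) - u + c := by
  rcases eq_or_lt_of_le hu with h | h
  · simp [← h, hc.le]
  · have h1 : Real.log (c / u) ≤ c / u - 1 := Real.log_le_sub_one_of_pos (by positivity)
    have h2 : Real.log (u / c) = - Real.log (c / u) := by
      rw [← Real.log_inv, inv_div]
    have h3 : u * Real.log (c / u) ≤ u * (c / u - 1) :=
      mul_le_mul_of_nonneg_left h1 h.le
    have h4 : u * (c / u - 1) = c - u := by field_simp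
    rw [h2]; linarith

lemma klterm_pos {u c : ℝ} (hu : 0 ≤ u) (hc : 0 < c) (hne : u ≠ c) :
    0 < u * Real.log (u / c) - u + c := by
  rcases eq_or_lt_of_le hu with h | h
  · simp [← h, hc]
  · have hne1 : c / u ≠ 1 := by
      intro hcu
      exact hne ((div_eq_one_iff_eq h.ne').mp hcu).symm
    have h1 : Real.log (c / u) < c / u - 1 :=
      Real.log_lt_sub_one_of_pos (by positivity) hne1
    have h2 : Real.log (u / c) = - Real.log (c / u) := by
      rw [← Real.log_inv, inv_div]
    have h3 : u * Real.log (c / u) < u * (c / u - 1) :=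
      mul_lt_mul_of_pos_left h1 h
    have h4 : u * (c / u - 1) = c - u := by field_simp
    rw [h2]; linarith

lemma mul_log_div_eq (c : ℝ) (hc : c ≠ 0) (x : ℝ) :
    x * Real.log (x / c) = x * Real.log x - x * Real.log c := by
  rcases eq_or_ne x 0 with h | h
  · simp [h]
  · rw [Real.log_div h hc, mul_sub]

/-- If `ε_k → ∞` and `(w_k, π_k)` is an optimal solution of the entropic
regularized discrete TiOT problem with parameter `ε_k`, then the whole sequence of
transport plans converges: `π_k → a b^⊤`. -/
theorem eTiOT_convergence_eps_infty {d m n : ℕ} (hm : 1 ≤ m) (hn : 1 ≤ n) (p : ℝ) (hp : 1 ≤ p)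
    (a : Fin m → ℝ) (b : Fin n → ℝ)
    (ha : ∀ i, 0 < a i) (ha1 : ∑ i, a i = 1) (hb : ∀ j, 0 < b j) (hb1 : ∑ j, b j = 1)
    (x : Fin m → Fin d → ℝ) (t : Fin m → ℝ) (y : Fin n → Fin d → ℝ) (s : Fin n → ℝ)
    (ε : ℕ → ℝ) (hε : ∀ k, 0 < ε k) (hεinf : Tendsto ε atTop atTop)
    (w : ℕ → ℝ) (π : ℕ → Matrix (Fin m) (Fin n) ℝ)
    (hw : ∀ k, w k ∈ Set.Icc (0 : ℝ) 1)
    (hπmem : ∀ k, π k ∈ transportPolytope a b)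
    (hπmin : ∀ k, ∀ π' ∈ transportPolytope a b,
      ip (costM p x t y s (w k)) (π k) + ε k * KLdiv (π k) (fun i j => a i * b j) ≤
        ip (costM p x t y s (w k)) π' + ε k * KLdiv π' (fun i j => a i * b j))
    (hwmax : ∀ k, ∀ w' ∈ Set.Icc (0 : ℝ) 1,
      sInf {r : ℝ | ∃ π' ∈ transportPolytope a b,
          r = ip (costM p x t y s w') π' + ε k * KLdiv π' (fun i j => a i * b j)} ≤
        ip (costM p x t y s (w k)) (π k) + ε k * KLdiv (π k) (fun i j => a i * b j)) :
    Tendsto π atTop (𝓝 (fun i j => a i * b j : Matrix (Fin m) (Fin n) ℝ)) := by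
  set γ : Matrix (Fin m) (Fin n) ℝ := fun i j => a i * b j with hγ
  have hγpos : ∀ i j, 0 < γ i j := fun i j => mul_pos (ha i) (hb j)
  -- γ is in the polytope
  have hγmem : γ ∈ transportPolytope a b := by
    refine ⟨fun i j => (hγpos i j).le, fun i => ?_, fun j => ?_⟩
    · simp [hγ, ← Finset.mul_sum, hb1]
    · simp [hγ, ← Finset.sum_mul, ha1]
  have hKLγ : KLdiv γ γ = 0 := by
    unfold KLdiv
    refine Finset.sum_eq_zero fun i _ => Finset.sum_eq_zero fun j _ => ?_
    rw [div_self (hγpos i j).ne']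
    simp
  -- KL nonneg on polytope
  have hKLnonneg : ∀ k, 0 ≤ KLdiv (π k) γ := by
    intro k
    refine Finset.sum_nonneg fun i _ => Finset.sum_nonneg fun j _ => ?_
    exact klterm_nonneg ((hπmem k).1 i j) (hγpos i j)
  -- Bound M
  set M : ℝ := ∑ i, ∑ j, ((∑ l, |x i l - y j l| ^ p) + |t i - s j| ^ p) * γ i j with hM
  have hCbound : ∀ k i j, costM p x t y s (w k) i j ≤
      (∑ l, |x i l - y j l| ^ p) + |t i - s j| ^ p := by
    intro k i j
    obtain ⟨hw0, hw1⟩ := hw k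
    have hS : (0:ℝ) ≤ ∑ l, |x i l - y j l| ^ p :=
      Finset.sum_nonneg fun l _ => Real.rpow_nonneg (abs_nonneg _) p
    have hT : (0:ℝ) ≤ |t i - s j| ^ p := Real.rpow_nonneg (abs_nonneg _) p
    unfold costM
    nlinarith
  have hCnonneg : ∀ k i j, 0 ≤ costM p x t y s (w k) i j := by
    intro k i j
    obtain ⟨hw0, hw1⟩ := hw k
    have hS : (0:ℝ) ≤ ∑ l, |x i l - y j l| ^ p :=
      Finset.sum_nonneg fun l _ => Real.rpow_nonneg (abs_nonneg _) p
    have hT : (0:ℝ) ≤ |t i - s j| ^ p := Real.rpow_nonneg (abs_nonneg _) p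
    unfold costM
    nlinarith
  have hKLle : ∀ k, KLdiv (π k) γ ≤ M / ε k := by
    intro k
    have h1 := hπmin k γ hγmem
    rw [hKLγ, mul_zero, add_zero] at h1
    have h2 : ip (costM p x t y s (w k)) γ ≤ M := by
      refine Finset.sum_le_sum fun i _ => Finset.sum_le_sum fun j _ => ?_
      exact mul_le_mul_of_nonneg_right (hCbound k i j) (hγpos i j).le
    have h3 : 0 ≤ ip (costM p x t y s (w k)) (π k) :=
      Finset.sum_nonneg fun i _ => Finset.sum_nonneg fun j _ =>
        mul_nonneg (hCnonneg k i j) ((hπmem k).1 i j)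
    rw [le_div_iff₀ (hε k), mul_comm]
    linarith
  -- KL (π k) γ → 0
  have hKLtendsto : Tendsto (fun k => KLdiv (π k) γ) atTop (𝓝 0) := by
    apply squeeze_zero hKLnonneg hKLle
    have : Tendsto (fun k => (ε k)⁻¹) atTop (𝓝 0) := hεinf.inv_tendsto_atTop
    have := this.const_mul M
    simpa [div_eq_mul_inv, mul_zero] using this
  -- continuity of KLdiv · γ
  have hFcont : Continuous (fun A : Matrix (Fin m) (Fin n) ℝ => KLdiv A γ) := by
    unfold KLdiv
    refine continuous_finset_sum _ fun i _ => continuous_finset_sum _ fun j _ => ?_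
    have hAij : Continuous (fun A : Matrix (Fin m) (Fin n) ℝ => A i j) :=
      (continuous_apply j).comp (continuous_apply i)
    have hterm : (fun A : Matrix (Fin m) (Fin n) ℝ =>
        A i j * Real.log (A i j / γ i j) - A i j + γ i j) =
        fun A => (A i j * Real.log (A i j) - A i j * Real.log (γ i j)) - A i j + γ i j := by
      funext A
      rw [mul_log_div_eq (γ i j) (hγpos i j).ne']
    rw [hterm]
    exact (((Real.continuous_mul_log.comp hAij).sub
      (hAij.mul continuous_const)).sub hAij).add continuous_const
  -- entries of π k in [0,1]
  have hπbd : ∀ k, π k ∈ Set.univ.pi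
      (fun _ : Fin m => Set.univ.pi fun _ : Fin n => Set.Icc (0:ℝ) 1) := by
    intro k
    intro i _ j _
    obtain ⟨hpos, hrow, hcol⟩ := hπmem k
    refine ⟨hpos i j, ?_⟩
    have h1 : π k i j ≤ ∑ j', π k i j' :=
      Finset.single_le_sum (fun j' _ => hpos i j') (Finset.mem_univ j)
    have h2 : a i ≤ ∑ i', a i' :=
      Finset.single_le_sum (fun i' _ => (ha i').le) (Finset.mem_univ i)
    rw [hrow i] at h1
    rw [ha1] at h2
    linarith
  have hKcompact : IsCompact (Set.univ.pi
      (fun _ : Fin m => Set.univ.pi fun _ : Fin n => Set.Icc (0:ℝ) 1) :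
      Set (Matrix (Fin m) (Fin n) ℝ)) :=
    isCompact_univ_pi fun _ => isCompact_univ_pi fun _ => isCompact_Icc
  haveI : FirstCountableTopology (Matrix (Fin m) (Fin n) ℝ) :=
    inferInstanceAs (FirstCountableTopology (Fin m → Fin n → ℝ))
  -- subsequence argument
  apply Filter.tendsto_of_subseq_tendsto
  intro ns hns
  obtain ⟨L, hL, φ, hφ, hφtendsto⟩ :=
    hKcompact.tendsto_subseq (X := Fin m → Fin n → ℝ) (x := fun k => π (ns k)) (fun k => hπbd (ns k))
  refine ⟨φ, ?_⟩
  -- show L = γ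
  have hFL : KLdiv L γ = 0 := by
    have h1 : Tendsto (fun k => KLdiv (π (ns (φ k))) γ) atTop (𝓝 (KLdiv L γ)) :=
      (hFcont.continuousAt.tendsto).comp hφtendsto
    have h2 : Tendsto (fun k => KLdiv (π (ns (φ k))) γ) atTop (𝓝 0) :=
      hKLtendsto.comp (hns.comp hφ.tendsto_atTop)
    exact tendsto_nhds_unique h1 h2
  have hLγ : L = γ := by
    by_contra hne
    have : ∃ i j, L i j ≠ γ i j := by
      by_contra hall
      push_neg at hall
      exact hne (funext fun i => funext fun j => hall i j)
    obtain ⟨i0, j0, hij⟩ := this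
    have hLnn : ∀ i j, 0 ≤ L i j := fun i j => (hL i (Set.mem_univ i) j (Set.mem_univ j)).1
    have hterms : ∀ i ∈ Finset.univ, 0 ≤ ∑ j, (L i j * Real.log (L i j / γ i j) - L i j + γ i j) :=
      fun i _ => Finset.sum_nonneg fun j _ => klterm_nonneg (hLnn i j) (hγpos i j)
    have hpos : 0 < ∑ j, (L i0 j * Real.log (L i0 j / γ i0 j) - L i0 j + γ i0 j) := by
      refine Finset.sum_pos' (fun j _ => klterm_nonneg (hLnn i0 j) (hγpos i0 j)) ?_
      exact ⟨j0, Finset.mem_univ j0, klterm_pos (hLnn i0 j0) (hγpos i0 j0) hij⟩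
    have : 0 < KLdiv L γ :=
      Finset.sum_pos' hterms ⟨i0, Finset.mem_univ i0, hpos⟩
    linarith [hFL, this]
  rw [← hLγ]
  exact hφtendsto
end
end

section
/- Let (u^k, v^k, w^k)_{k≥0} be the iterates of the hybrid block coordinate descent (HBCD) scheme for the dual entropic TiOT objective, started from any initial point. Then for every k ≥ 1, ‖u^k‖_∞ ≤ 2‖C‖_∞ and ‖v^k‖_∞ ≤ 3‖C‖_∞, where ‖C‖_∞ = max{‖C(0)‖_∞, ‖C(1)‖_∞} and ‖C(w)‖_∞ is the maximum absolute value of the entries of C(w). -/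
open Finset Filter Topology

noncomputable section

/-- `C̃_{ij} = ‖x_i − y_j‖_p^p − |t_i − s_j|^p`. -/
def tildeC {d m n : ℕ} (p : ℝ) (x : Fin m → Fin d → ℝ) (t : Fin m → ℝ)
    (y : Fin n → Fin d → ℝ) (s : Fin n → ℝ) : Matrix (Fin m) (Fin n) ℝ :=
  fun i j => (∑ l, |x i l - y j l| ^ p) - |t i - s j| ^ p

/-- Entrywise sup norm of a matrix. -/
def matSup {m n : ℕ} (C : Matrix (Fin m) (Fin n) ℝ) : ℝ := ⨆ i, ⨆ j, |C i j|

/-- `‖C‖_∞ = max{‖C(0)‖_∞, ‖C(1)‖_∞}`. -/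
def CsupNorm {d m n : ℕ} (p : ℝ) (x : Fin m → Fin d → ℝ) (t : Fin m → ℝ)
    (y : Fin n → Fin d → ℝ) (s : Fin n → ℝ) : ℝ :=
  max (matSup (costM p x t y s 0)) (matSup (costM p x t y s 1))

/-- The dual entropic TiOT objective
`F(u,v,w) = −u^⊤a − v^⊤b + ε Σ_{i,j} exp((u_i + v_j − C(w)_{ij})/ε) a_i b_j − ε`. -/
def Fobj {d m n : ℕ} (p ε : ℝ) (a : Fin m → ℝ) (b : Fin n → ℝ)
    (x : Fin m → Fin d → ℝ) (t : Fin m → ℝ) (y : Fin n → Fin d → ℝ) (s : Fin n → ℝ)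
    (u : Fin m → ℝ) (v : Fin n → ℝ) (w : ℝ) : ℝ :=
  -(∑ i, u i * a i) - (∑ j, v j * b j) +
    ε * (∑ i, ∑ j, Real.exp ((u i + v j - costM p x t y s w i j) / ε) * (a i * b j)) - ε

/-- `∇_w F(u,v,w) = −Σ_{i,j} C̃_{ij} exp((u_i + v_j − C(w)_{ij})/ε) a_i b_j`. -/
def gradW {d m n : ℕ} (p ε : ℝ) (a : Fin m → ℝ) (b : Fin n → ℝ)
    (x : Fin m → Fin d → ℝ) (t : Fin m → ℝ) (y : Fin n → Fin d → ℝ) (s : Fin n → ℝ)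
    (u : Fin m → ℝ) (v : Fin n → ℝ) (w : ℝ) : ℝ :=
  -(∑ i, ∑ j, tildeC p x t y s i j *
      Real.exp ((u i + v j - costM p x t y s w i j) / ε) * (a i * b j))

/-- The HBCD iteration with stepsize `η`: exact minimization in the `u` and `v` blocks
(with the normalization `a^⊤ u^{k+1} = 0`), and one projected gradient step in `w`. -/
def HBCDseq {d m n : ℕ} (p ε η : ℝ) (a : Fin m → ℝ) (b : Fin n → ℝ)
    (x : Fin m → Fin d → ℝ) (t : Fin m → ℝ) (y : Fin n → Fin d → ℝ) (s : Fin n → ℝ)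
    (u : ℕ → Fin m → ℝ) (v : ℕ → Fin n → ℝ) (w : ℕ → ℝ) : Prop :=
  ∀ k : ℕ,
    u (k + 1) = (fun i =>
      -ε * Real.log (∑ j, Real.exp (-costM p x t y s (w k) i j / ε) *
          (Real.exp (v k j / ε) * b j)) +
        ε * ∑ i', a i' * Real.log (∑ j, Real.exp (-costM p x t y s (w k) i' j / ε) *
          (Real.exp (v k j / ε) * b j))) ∧
    v (k + 1) = (fun j =>
      -ε * Real.log (∑ i, Real.exp (-costM p x t y s (w k) i j / ε) *
          (Real.exp (u (k + 1) i / ε) * a i))) ∧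
    w (k + 1) = min 1 (max 0
      (w k - η * gradW p ε a b x t y s (u (k + 1)) (v (k + 1)) (w k)))

/-- The feasible set `{(u,v,w) : a^⊤u = 0, w ∈ [0,1]}` of the dual entropic TiOT problem. -/
def feasSet {m n : ℕ} (a : Fin m → ℝ) : Set ((Fin m → ℝ) × (Fin n → ℝ) × ℝ) :=
  {ζ | (∑ i, a i * ζ.1 i) = 0 ∧ ζ.2.2 ∈ Set.Icc (0 : ℝ) 1}

/-- The set `S̃` of optimal solutions of the dual entropic TiOT minimization problem. -/
def optSet {d m n : ℕ} (p ε : ℝ) (a : Fin m → ℝ) (b : Fin n → ℝ)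
    (x : Fin m → Fin d → ℝ) (t : Fin m → ℝ) (y : Fin n → Fin d → ℝ) (s : Fin n → ℝ) :
    Set ((Fin m → ℝ) × (Fin n → ℝ) × ℝ) :=
  {ζ | ζ ∈ feasSet a ∧ ∀ ζ' ∈ feasSet (n := n) a,
    Fobj p ε a b x t y s ζ.1 ζ.2.1 ζ.2.2 ≤ Fobj p ε a b x t y s ζ'.1 ζ'.2.1 ζ'.2.2}

/-- The optimal value `F*` of the dual entropic TiOT problem. -/
def Fstar {d m n : ℕ} (p ε : ℝ) (a : Fin m → ℝ) (b : Fin n → ℝ)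
    (x : Fin m → Fin d → ℝ) (t : Fin m → ℝ) (y : Fin n → Fin d → ℝ) (s : Fin n → ℝ) : ℝ :=
  sInf {r : ℝ | ∃ ζ : (Fin m → ℝ) × (Fin n → ℝ) × ℝ, ζ ∈ feasSet a ∧
    r = Fobj p ε a b x t y s ζ.1 ζ.2.1 ζ.2.2}

/-- Euclidean (`ℓ²`) distance on `(Fin m → ℝ) × (Fin n → ℝ) × ℝ`. -/
def dist2 {m n : ℕ} (ζ ζ' : (Fin m → ℝ) × (Fin n → ℝ) × ℝ) : ℝ :=
  Real.sqrt ((∑ i, (ζ.1 i - ζ'.1 i) ^ 2) + (∑ j, (ζ.2.1 j - ζ'.2.1 j) ^ 2) +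
    (ζ.2.2 - ζ'.2.2) ^ 2)

/-- The HBCD iterates satisfy `‖u^k‖_∞ ≤ 2‖C‖_∞` and
`‖v^k‖_∞ ≤ 3‖C‖_∞` for every `k ≥ 1`. -/
theorem HBCD_iterates_bounded {d m n : ℕ} (hm : 1 ≤ m) (hn : 1 ≤ n)
    (p ε η : ℝ) (hp : 1 ≤ p) (hε : 0 < ε) (hη : 0 < η)
    (a : Fin m → ℝ) (b : Fin n → ℝ)
    (ha : ∀ i, 0 < a i) (ha1 : ∑ i, a i = 1) (hb : ∀ j, 0 < b j) (hb1 : ∑ j, b j = 1)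
    (x : Fin m → Fin d → ℝ) (t : Fin m → ℝ) (y : Fin n → Fin d → ℝ) (s : Fin n → ℝ)
    (u : ℕ → Fin m → ℝ) (v : ℕ → Fin n → ℝ) (w : ℕ → ℝ)
    (hw0 : w 0 ∈ Set.Icc (0 : ℝ) 1)
    (hseq : HBCDseq p ε η a b x t y s u v w) :
    ∀ k ≥ 1, (∀ i, |u k i| ≤ 2 * CsupNorm p x t y s) ∧
      (∀ j, |v k j| ≤ 3 * CsupNorm p x t y s) := by
  have hm' : 0 < m := hm
  have hn' : 0 < n := hn
  haveI : Nonempty (Fin m) := ⟨⟨0, hm'⟩⟩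
  haveI : Nonempty (Fin n) := ⟨⟨0, hn'⟩⟩
  set M := CsupNorm p x t y s with hMdef
  have hmat : ∀ (C : Matrix (Fin m) (Fin n) ℝ) (i : Fin m) (j : Fin n),
      |C i j| ≤ matSup C := by
    intro C i j
    have h1 : |C i j| ≤ ⨆ j', |C i j'| :=
      le_ciSup (f := fun j' => |C i j'|) (Set.Finite.bddAbove (Set.finite_range _)) j
    have h2 : (⨆ j', |C i j'|) ≤ ⨆ i', ⨆ j', |C i' j'| :=
      le_ciSup (f := fun i' => ⨆ j', |C i' j'|) (Set.Finite.bddAbove (Set.finite_range _)) i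
    exact h1.trans h2
  have hM0 : 0 ≤ M := by
    have h : |costM p x t y s 0 ⟨0, hm'⟩ ⟨0, hn'⟩| ≤ M :=
      (hmat (costM p x t y s 0) ⟨0, hm'⟩ ⟨0, hn'⟩).trans (le_max_left _ _)
    exact (abs_nonneg _).trans h
  have hCb : ∀ w' : ℝ, 0 ≤ w' → w' ≤ 1 → ∀ i j,
      0 ≤ costM p x t y s w' i j ∧ costM p x t y s w' i j ≤ M := by
    intro w' hw0' hw1' i j
    have hA : 0 ≤ ∑ l, |x i l - y j l| ^ p :=
      Finset.sum_nonneg fun l _ => Real.rpow_nonneg (abs_nonneg _) _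
    have hB : 0 ≤ |t i - s j| ^ p := Real.rpow_nonneg (abs_nonneg _) _
    have hA' : (∑ l, |x i l - y j l| ^ p) ≤ M := by
      have h : |costM p x t y s 1 i j| ≤ M :=
        (hmat (costM p x t y s 1) i j).trans (le_max_right _ _)
      simpa [costM, abs_of_nonneg hA] using h
    have hB' : |t i - s j| ^ p ≤ M := by
      have h : |costM p x t y s 0 i j| ≤ M :=
        (hmat (costM p x t y s 0) i j).trans (le_max_left _ _)
      simpa [costM, abs_of_nonneg hB] using h
    constructor
    · exact add_nonneg (mul_nonneg hw0' hA) (mul_nonneg (by linarith) hB)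
    · have h1 := mul_le_mul_of_nonneg_left hA' hw0'
      have h2 := mul_le_mul_of_nonneg_left hB' (show (0:ℝ) ≤ 1 - w' by linarith)
      show w' * (∑ l, |x i l - y j l| ^ p) + (1 - w') * |t i - s j| ^ p ≤ M
      nlinarith
  have hwk : ∀ k, 0 ≤ w k ∧ w k ≤ 1 := by
    intro k
    induction k with
    | zero => exact ⟨hw0.1, hw0.2⟩
    | succ k ih =>
      rw [(hseq k).2.2]
      exact ⟨le_min zero_le_one (le_max_left _ _), min_le_left _ _⟩
  intro k hk
  obtain ⟨k', rfl⟩ : ∃ k', k = k' + 1 := ⟨k - 1, (Nat.succ_pred_eq_of_pos hk).symm⟩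
  obtain ⟨hu, hv, -⟩ := hseq k'
  obtain ⟨hwl, hwr⟩ := hwk k'
  have hC0 : ∀ i j, 0 ≤ costM p x t y s (w k') i j := fun i j => (hCb _ hwl hwr i j).1
  have hCM : ∀ i j, costM p x t y s (w k') i j ≤ M := fun i j => (hCb _ hwl hwr i j).2
  have hMe : ε * (M / ε) = M := by field_simp
  -- the `u` update
  set g : Fin m → ℝ := fun i =>
    Real.log (∑ j, Real.exp (-costM p x t y s (w k') i j / ε) *
      (Real.exp (v k' j / ε) * b j)) with hgdef
  have huF : ∀ i, u (k' + 1) i = -ε * g i + ε * ∑ i', a i' * g i' := by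
    intro i; rw [hu]
  set S : ℝ := ∑ j, Real.exp (v k' j / ε) * b j with hSdef
  have hSpos : 0 < S :=
    Finset.sum_pos (fun j _ => mul_pos (Real.exp_pos _) (hb j)) Finset.univ_nonempty
  have hinnerpos : ∀ i, 0 < ∑ j, Real.exp (-costM p x t y s (w k') i j / ε) *
      (Real.exp (v k' j / ε) * b j) := fun i =>
    Finset.sum_pos (fun j _ => mul_pos (Real.exp_pos _) (mul_pos (Real.exp_pos _) (hb j)))
      Finset.univ_nonempty
  have hg_up : ∀ i, g i ≤ Real.log S := by
    intro i
    apply Real.log_le_log (hinnerpos i)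
    apply Finset.sum_le_sum
    intro j _
    have h1 : Real.exp (-costM p x t y s (w k') i j / ε) ≤ 1 :=
      Real.exp_le_one_iff.2
        (div_nonpos_of_nonpos_of_nonneg (neg_nonpos.2 (hC0 i j)) hε.le)
    exact mul_le_of_le_one_left (le_of_lt (mul_pos (Real.exp_pos _) (hb j))) h1
  have hg_low : ∀ i, Real.log S - M / ε ≤ g i := by
    intro i
    have hstep : Real.exp (-M / ε) * S ≤
        ∑ j, Real.exp (-costM p x t y s (w k') i j / ε) *
          (Real.exp (v k' j / ε) * b j) := by
      rw [hSdef, Finset.mul_sum]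
      apply Finset.sum_le_sum
      intro j _
      apply mul_le_mul_of_nonneg_right _ (le_of_lt (mul_pos (Real.exp_pos _) (hb j)))
      apply Real.exp_le_exp.2
      gcongr
      exact hCM i j
    have heq : Real.log S - M / ε = Real.log (Real.exp (-M / ε) * S) := by
      rw [Real.log_mul (Real.exp_ne_zero _) hSpos.ne', Real.log_exp]; ring
    rw [heq]
    exact Real.log_le_log (mul_pos (Real.exp_pos _) hSpos) hstep
  have hsum_up : ∑ i', a i' * g i' ≤ Real.log S := by
    calc ∑ i', a i' * g i' ≤ ∑ i', a i' * Real.log S :=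
          Finset.sum_le_sum fun i' _ => mul_le_mul_of_nonneg_left (hg_up i') (ha i').le
      _ = Real.log S := by rw [← Finset.sum_mul, ha1, one_mul]
  have hsum_low : Real.log S - M / ε ≤ ∑ i', a i' * g i' := by
    calc Real.log S - M / ε = ∑ i', a i' * (Real.log S - M / ε) := by
          rw [← Finset.sum_mul, ha1, one_mul]
      _ ≤ ∑ i', a i' * g i' :=
          Finset.sum_le_sum fun i' _ => mul_le_mul_of_nonneg_left (hg_low i') (ha i').le
  have hubound : ∀ i, |u (k' + 1) i| ≤ M := by
    intro i
    rw [huF i, abs_le]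
    have h1 := mul_le_mul_of_nonneg_left (hg_low i) hε.le
    have h2 := mul_le_mul_of_nonneg_left (hg_up i) hε.le
    have h3 := mul_le_mul_of_nonneg_left hsum_low hε.le
    have h4 := mul_le_mul_of_nonneg_left hsum_up hε.le
    rw [mul_sub, hMe] at h1 h3
    constructor <;> nlinarith
  -- the `v` update
  set h : Fin n → ℝ := fun j =>
    Real.log (∑ i, Real.exp (-costM p x t y s (w k') i j / ε) *
      (Real.exp (u (k' + 1) i / ε) * a i)) with hhdef
  have hvF : ∀ j, v (k' + 1) j = -ε * h j := by
    intro j; rw [hv]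
  have hin2pos : ∀ j, 0 < ∑ i, Real.exp (-costM p x t y s (w k') i j / ε) *
      (Real.exp (u (k' + 1) i / ε) * a i) := fun j =>
    Finset.sum_pos (fun i _ => mul_pos (Real.exp_pos _) (mul_pos (Real.exp_pos _) (ha i)))
      Finset.univ_nonempty
  have hh_up : ∀ j, h j ≤ M / ε := by
    intro j
    have hle : ∑ i, Real.exp (-costM p x t y s (w k') i j / ε) *
        (Real.exp (u (k' + 1) i / ε) * a i) ≤ Real.exp (M / ε) := by
      calc ∑ i, Real.exp (-costM p x t y s (w k') i j / ε) *
            (Real.exp (u (k' + 1) i / ε) * a i)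
          ≤ ∑ i, Real.exp (M / ε) * a i := by
            apply Finset.sum_le_sum
            intro i _
            rw [← mul_assoc, ← Real.exp_add]
            apply mul_le_mul_of_nonneg_right _ (ha i).le
            apply Real.exp_le_exp.2
            have ha1' : -costM p x t y s (w k') i j / ε ≤ 0 :=
              div_nonpos_of_nonpos_of_nonneg (neg_nonpos.2 (hC0 i j)) hε.le
            have ha2' : u (k' + 1) i / ε ≤ M / ε := by
              gcongr
              exact (abs_le.1 (hubound i)).2
            linarith
        _ = Real.exp (M / ε) := by rw [← Finset.mul_sum, ha1, mul_one]
    have := Real.log_le_log (hin2pos j) hle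
    rwa [Real.log_exp] at this
  have hh_low : ∀ j, (-M - M) / ε ≤ h j := by
    intro j
    have hle : Real.exp ((-M - M) / ε) ≤
        ∑ i, Real.exp (-costM p x t y s (w k') i j / ε) *
          (Real.exp (u (k' + 1) i / ε) * a i) := by
      calc Real.exp ((-M - M) / ε) = ∑ i, Real.exp ((-M - M) / ε) * a i := by
            rw [← Finset.mul_sum, ha1, mul_one]
        _ ≤ ∑ i, Real.exp (-costM p x t y s (w k') i j / ε) *
              (Real.exp (u (k' + 1) i / ε) * a i) := by
            apply Finset.sum_le_sum
            intro i _
            rw [← mul_assoc, ← Real.exp_add]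
            apply mul_le_mul_of_nonneg_right _ (ha i).le
            apply Real.exp_le_exp.2
            have ha1' : -M / ε ≤ -costM p x t y s (w k') i j / ε := by
              gcongr
              exact hCM i j
            have ha2' : -M / ε ≤ u (k' + 1) i / ε := by
              gcongr
              exact (abs_le.1 (hubound i)).1
            have : (-M - M) / ε = -M / ε + -M / ε := by ring
            linarith [this.le]
        _ = _ := rfl
    have := Real.log_le_log (Real.exp_pos _) hle
    rwa [Real.log_exp] at this
  have hMe2 : ε * ((-M - M) / ε) = -M - M := by field_simp
  refine ⟨fun i => (hubound i).trans (by linarith), fun j => ?_⟩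
  rw [hvF j, abs_le]
  have h1 := mul_le_mul_of_nonneg_left (hh_low j) hε.le
  have h2 := mul_le_mul_of_nonneg_left (hh_up j) hε.le
  rw [hMe2] at h1
  rw [hMe] at h2
  constructor <;> nlinarith
end
end

section
/- Let u ∈ ℝ^m and v ∈ ℝ^n satisfy ‖u‖_∞ ≤ 2‖C‖_∞ and ‖v‖_∞ ≤ 3‖C‖_∞. Then the partial derivative ∇_w F(u, v, ·) is Lipschitz on [0,1]: for all w, w' ∈ [0,1], |∇_w F(u,v,w) − ∇_w F(u,v,w')| ≤ (‖C̃‖_∞² / ε) · exp(6‖C‖_∞/ε) · |w − w'|. -/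
open Finset Filter Topology

noncomputable section

lemma exp_sub_exp_abs_le {a b c : ℝ} (ha : a ≤ c) (hb : b ≤ c) :
    |Real.exp a - Real.exp b| ≤ Real.exp c * |a - b| := by
  wlog h : b ≤ a generalizing a b
  · rw [abs_sub_comm, abs_sub_comm a b]; exact this hb ha (le_of_not_ge h)
  rw [abs_of_nonneg (sub_nonneg.2 (Real.exp_le_exp.2 h)), abs_of_nonneg (sub_nonneg.2 h)]
  have h2 : Real.exp (a - b) - 1 ≤ (a - b) * Real.exp (a - b) := by
    have h3 : (b - a) + 1 ≤ Real.exp (b - a) := Real.add_one_le_exp _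
    have h4 : Real.exp (a - b) * Real.exp (b - a) = 1 := by
      rw [← Real.exp_add]; simp
    nlinarith [Real.exp_pos (a - b)]
  have h5 : Real.exp a - Real.exp b = Real.exp b * (Real.exp (a - b) - 1) := by
    rw [mul_sub, ← Real.exp_add, mul_one]; ring_nf
  have h6 : Real.exp b * Real.exp (a - b) = Real.exp a := by
    rw [← Real.exp_add]; ring_nf
  have h7 : Real.exp a ≤ Real.exp c := Real.exp_le_exp.2 ha
  nlinarith [Real.exp_pos b, sub_nonneg.2 h]

/-- If `‖u‖_∞ ≤ 2‖C‖_∞` and `‖v‖_∞ ≤ 3‖C‖_∞`, then `∇_w F(u,v,·)`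
is Lipschitz on `[0,1]` with constant `(‖C̃‖_∞²/ε) exp(6‖C‖_∞/ε)`. -/
theorem gradW_lipschitz {d m n : ℕ} (hm : 1 ≤ m) (hn : 1 ≤ n)
    (p ε : ℝ) (hp : 1 ≤ p) (hε : 0 < ε)
    (a : Fin m → ℝ) (b : Fin n → ℝ)
    (ha : ∀ i, 0 < a i) (ha1 : ∑ i, a i = 1) (hb : ∀ j, 0 < b j) (hb1 : ∑ j, b j = 1)
    (x : Fin m → Fin d → ℝ) (t : Fin m → ℝ) (y : Fin n → Fin d → ℝ) (s : Fin n → ℝ)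
    (u : Fin m → ℝ) (v : Fin n → ℝ)
    (hu : ∀ i, |u i| ≤ 2 * CsupNorm p x t y s)
    (hv : ∀ j, |v j| ≤ 3 * CsupNorm p x t y s) :
    ∀ w ∈ Set.Icc (0 : ℝ) 1, ∀ w' ∈ Set.Icc (0 : ℝ) 1,
      |gradW p ε a b x t y s u v w - gradW p ε a b x t y s u v w'| ≤
        (matSup (tildeC p x t y s) ^ 2 / ε) *
          Real.exp (6 * CsupNorm p x t y s / ε) * |w - w'| := by
  intro w hw w' hw'
  set K := CsupNorm p x t y s with hK
  set M := matSup (tildeC p x t y s) with hMdef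
  -- entrywise bound for tildeC
  have hCtil : ∀ i j, |tildeC p x t y s i j| ≤ M := by
    intro i j
    refine le_trans (le_ciSup (f := fun j => |tildeC p x t y s i j|)
      (Set.Finite.bddAbove (Set.finite_range _)) j) ?_
    exact le_ciSup (f := fun i => ⨆ j, |tildeC p x t y s i j|)
      (Set.Finite.bddAbove (Set.finite_range _)) i
  have hM0 : 0 ≤ M := le_trans (abs_nonneg _) (hCtil ⟨0, hm⟩ ⟨0, hn⟩)
  -- entrywise bound for costM at endpoints
  have hend : ∀ w₀ : ℝ, w₀ = 0 ∨ w₀ = 1 → ∀ i j, |costM p x t y s w₀ i j| ≤ K := by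
    intro w₀ hw₀ i j
    have hle : matSup (costM p x t y s w₀) ≤ K := by
      rcases hw₀ with h | h <;> rw [h, hK, CsupNorm]
      · exact le_max_left _ _
      · exact le_max_right _ _
    refine le_trans (le_trans (le_ciSup (f := fun j => |costM p x t y s w₀ i j|)
      (Set.Finite.bddAbove (Set.finite_range _)) j)
      (le_ciSup (f := fun i => ⨆ j, |costM p x t y s w₀ i j|)
      (Set.Finite.bddAbove (Set.finite_range _)) i)) hle
  have hK0 : 0 ≤ K := le_trans (abs_nonneg _) (hend 0 (Or.inl rfl) ⟨0, hm⟩ ⟨0, hn⟩)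
  have hcost : ∀ w₀ ∈ Set.Icc (0:ℝ) 1, ∀ i j, |costM p x t y s w₀ i j| ≤ K := by
    intro w₀ hw₀ i j
    obtain ⟨h0, h1⟩ := hw₀
    have hconv : costM p x t y s w₀ i j =
        w₀ * costM p x t y s 1 i j + (1 - w₀) * costM p x t y s 0 i j := by
      simp only [costM]; ring
    rw [hconv]
    have e1 := abs_le.1 (hend 1 (Or.inr rfl) i j)
    have e0 := abs_le.1 (hend 0 (Or.inl rfl) i j)
    rw [abs_le]
    constructor <;> nlinarith [e1.1, e1.2, e0.1, e0.2]
  -- exponent bound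
  have hexpo : ∀ w₀ ∈ Set.Icc (0:ℝ) 1, ∀ i j,
      (u i + v j - costM p x t y s w₀ i j) / ε ≤ 6 * K / ε := by
    intro w₀ hw₀ i j
    have h1 : u i ≤ 2 * K := le_trans (le_abs_self _) (hu i)
    have h2 : v j ≤ 3 * K := le_trans (le_abs_self _) (hv j)
    have h3 : -costM p x t y s w₀ i j ≤ K := le_trans (neg_le_abs _) (hcost w₀ hw₀ i j)
    have h4 : u i + v j - costM p x t y s w₀ i j ≤ 6 * K := by linarith
    gcongr
  -- rewrite the difference
  have hdiff : gradW p ε a b x t y s u v w - gradW p ε a b x t y s u v w' =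
      ∑ i, ∑ j, tildeC p x t y s i j *
        (Real.exp ((u i + v j - costM p x t y s w' i j) / ε) -
         Real.exp ((u i + v j - costM p x t y s w i j) / ε)) * (a i * b j) := by
    simp only [gradW]
    rw [neg_sub_neg, ← Finset.sum_sub_distrib]
    refine Finset.sum_congr rfl fun i _ => ?_
    rw [← Finset.sum_sub_distrib]
    refine Finset.sum_congr rfl fun j _ => ?_
    ring
  set L := M ^ 2 / ε * Real.exp (6 * K / ε) * |w - w'| with hL
  have hterm : ∀ i j, |tildeC p x t y s i j *
      (Real.exp ((u i + v j - costM p x t y s w' i j) / ε) -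
       Real.exp ((u i + v j - costM p x t y s w i j) / ε)) * (a i * b j)| ≤
      L * (a i * b j) := by
    intro i j
    have hab : 0 ≤ a i * b j := le_of_lt (mul_pos (ha i) (hb j))
    rw [abs_mul, abs_mul, abs_of_nonneg hab]
    have hdexp : |Real.exp ((u i + v j - costM p x t y s w' i j) / ε) -
        Real.exp ((u i + v j - costM p x t y s w i j) / ε)| ≤
        Real.exp (6 * K / ε) * (|tildeC p x t y s i j| * |w - w'| / ε) := by
      refine le_trans (exp_sub_exp_abs_le (hexpo w' hw' i j) (hexpo w hw i j)) ?_
      have heq : (u i + v j - costM p x t y s w' i j) / ε -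
          (u i + v j - costM p x t y s w i j) / ε =
          (w - w') * tildeC p x t y s i j / ε := by
        rw [div_sub_div_same]
        congr 1
        simp only [costM, tildeC]; ring
      rw [heq]
      rw [abs_div, abs_mul, abs_of_pos hε]
      apply le_of_eq; ring
    have hdexp2 : |Real.exp ((u i + v j - costM p x t y s w' i j) / ε) -
        Real.exp ((u i + v j - costM p x t y s w i j) / ε)| ≤
        Real.exp (6 * K / ε) * (M * |w - w'| / ε) := by
      refine le_trans hdexp ?_
      gcongr
      exact hCtil i j
    calc |tildeC p x t y s i j| *
        |Real.exp ((u i + v j - costM p x t y s w' i j) / ε) -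
         Real.exp ((u i + v j - costM p x t y s w i j) / ε)| * (a i * b j)
        ≤ M * (Real.exp (6 * K / ε) * (M * |w - w'| / ε)) * (a i * b j) :=
          mul_le_mul_of_nonneg_right
            (mul_le_mul (hCtil i j) hdexp2 (abs_nonneg _) hM0) hab
      _ = L * (a i * b j) := by rw [hL]; ring
  have hsum : ∑ i, ∑ j, (L * (a i * b j)) = L := by
    have hinner : ∀ i : Fin m, ∑ j, L * (a i * b j) = L * a i := by
      intro i
      simp_rw [← mul_assoc]
      rw [← Finset.mul_sum, hb1, mul_one]
    rw [Finset.sum_congr rfl (fun i _ => hinner i), ← Finset.mul_sum, ha1, mul_one]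
  calc |gradW p ε a b x t y s u v w - gradW p ε a b x t y s u v w'|
      ≤ ∑ i, ∑ j, |tildeC p x t y s i j *
        (Real.exp ((u i + v j - costM p x t y s w' i j) / ε) -
         Real.exp ((u i + v j - costM p x t y s w i j) / ε)) * (a i * b j)| := by
        rw [hdiff]
        refine le_trans (Finset.abs_sum_le_sum_abs _ _) ?_
        exact Finset.sum_le_sum fun i _ => Finset.abs_sum_le_sum_abs _ _
    _ ≤ ∑ i, ∑ j, L * (a i * b j) :=
        Finset.sum_le_sum fun i _ => Finset.sum_le_sum fun j _ => hterm i j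
    _ = L := hsum
    _ = M ^ 2 / ε * Real.exp (6 * K / ε) * |w - w'| := rfl
end
end

section
/- Let (u^k, v^k, w^k) and (u^{k+1}, v^{k+1}, w^{k+1}) be consecutive iterates of the HBCD scheme with stepsize η = (ε/‖C̃‖_∞²) · exp(−6‖C‖_∞/ε), for any k ≥ 1. Then the sufficient descent inequality holds: F(u^k,v^k,w^k) − F(u^{k+1},v^{k+1},w^{k+1}) ≥ κ (‖u^k − u^{k+1}‖²_{L²(a)} + ‖v^k − v^{k+1}‖²_{L²(b)}) + τ |w^k − w^{k+1}|², where κ = exp(−6‖C‖_∞/ε)/(2ε) and τ = ‖C̃‖_∞² exp(6‖C‖_∞/ε)/(2ε). -/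
open Finset Filter Topology

noncomputable section

lemma mono_g : Monotone (fun θ : ℝ => Real.exp θ - 1 - θ - θ ^ 2 / 2) := by
  have hd : ∀ x : ℝ, HasDerivAt (fun θ : ℝ => Real.exp θ - 1 - θ - θ ^ 2 / 2)
      (Real.exp x - 1 - x) x := by
    intro x
    have h2 : HasDerivAt (fun θ : ℝ => θ ^ 2 / 2) x x := by
      simpa using (hasDerivAt_pow 2 x).div_const 2
    exact (((Real.hasDerivAt_exp x).sub_const 1).sub (hasDerivAt_id x)).sub h2
  apply monotone_of_deriv_nonneg (fun x => (hd x).differentiableAt)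
  intro x
  rw [(hd x).deriv]
  nlinarith [Real.add_one_le_exp x]


lemma mono_f : Monotone (fun σ : ℝ => (σ - 1) * Real.exp σ + 1 - σ ^ 2 / 2) := by
  have hd : ∀ x : ℝ, HasDerivAt (fun σ : ℝ => (σ - 1) * Real.exp σ + 1 - σ ^ 2 / 2)
      (x * Real.exp x - x) x := by
    intro x
    have h1 : HasDerivAt (fun σ : ℝ => (σ - 1) * Real.exp σ)
        (1 * Real.exp x + (x - 1) * Real.exp x) x :=
      ((hasDerivAt_id x).sub_const 1).mul (Real.hasDerivAt_exp x)
    have h2 : HasDerivAt (fun σ : ℝ => σ ^ 2 / 2) x x := by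
      simpa using (hasDerivAt_pow 2 x).div_const 2
    have h3 := (h1.add_const 1).sub h2
    exact h3.congr_deriv (by ring)
  apply monotone_of_deriv_nonneg (fun x => (hd x).differentiableAt)
  intro x
  rw [(hd x).deriv]
  have key : Real.exp x * Real.exp (-x) = 1 := by rw [← Real.exp_add]; simp
  rcases le_or_gt 0 x with hx | hx
  · nlinarith [Real.add_one_le_exp x]
  · nlinarith [key, Real.add_one_le_exp (-x), Real.exp_pos (-x), Real.exp_pos x]


lemma aux_exp_ge (θ : ℝ) : Real.exp (min 0 θ) * θ ^ 2 / 2 ≤ Real.exp θ - 1 - θ := by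
  rcases le_total 0 θ with hθ | hθ
  · rw [min_eq_left hθ, Real.exp_zero]
    have := mono_g hθ
    simp only [Real.exp_zero] at this
    nlinarith [this]
  · rw [min_eq_right hθ]
    have hf := mono_f (show (0:ℝ) ≤ -θ by linarith)
    simp only [Real.exp_zero] at hf
    have key : Real.exp θ * Real.exp (-θ) = 1 := by rw [← Real.exp_add]; simp
    nlinarith [key, Real.exp_pos θ, hf, mul_nonneg (Real.exp_pos θ).le
      (show (0:ℝ) ≤ (-θ - 1) * Real.exp (-θ) + 1 - (-θ) ^ 2 / 2 by nlinarith [hf])]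


lemma aux_exp_le (θ : ℝ) : Real.exp θ - 1 - θ ≤ Real.exp (max 0 θ) * θ ^ 2 / 2 := by
  rcases le_total θ 0 with hθ | hθ
  · rw [max_eq_left hθ, Real.exp_zero]
    have := mono_g hθ
    simp only [Real.exp_zero] at this
    nlinarith [this]
  · rw [max_eq_right hθ]
    have hf := mono_f (show -θ ≤ (0:ℝ) by linarith)
    simp only [Real.exp_zero] at hf
    have key : Real.exp θ * Real.exp (-θ) = 1 := by rw [← Real.exp_add]; simp
    nlinarith [key, Real.exp_pos θ, hf, mul_nonneg (Real.exp_pos θ).le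
      (show (0:ℝ) ≤ -((-θ - 1) * Real.exp (-θ) + 1 - (-θ) ^ 2 / 2) by nlinarith [hf])]


lemma sum_exp_lower {n : ℕ} (hn : 1 ≤ n) {ε : ℝ} (hε : 0 < ε) (b : Fin n → ℝ)
    (hb : ∀ j, 0 < b j) (hb1 : ∑ j, b j = 1) (c : Fin n → ℝ) (L : ℝ) (hL : ∀ j, L ≤ c j) :
    Real.exp (L / ε) ≤ ∑ j, Real.exp (c j / ε) * b j := by
  haveI : Nonempty (Fin n) := Fin.pos_iff_nonempty.mp hn
  calc Real.exp (L / ε) = ∑ j, Real.exp (L / ε) * b j := by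
        rw [← Finset.mul_sum, hb1, mul_one]
    _ ≤ ∑ j, Real.exp (c j / ε) * b j := by
        apply Finset.sum_le_sum
        intro j _
        have h1 : L / ε ≤ c j / ε := by
          rw [div_le_div_iff₀ hε hε]; nlinarith [hL j]
        exact mul_le_mul_of_nonneg_right (Real.exp_le_exp.mpr h1) (hb j).le


lemma sum_exp_upper {n : ℕ} (hn : 1 ≤ n) {ε : ℝ} (hε : 0 < ε) (b : Fin n → ℝ)
    (hb : ∀ j, 0 < b j) (hb1 : ∑ j, b j = 1) (c : Fin n → ℝ) (U : ℝ) (hU : ∀ j, c j ≤ U) :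
    ∑ j, Real.exp (c j / ε) * b j ≤ Real.exp (U / ε) := by
  haveI : Nonempty (Fin n) := Fin.pos_iff_nonempty.mp hn
  calc ∑ j, Real.exp (c j / ε) * b j ≤ ∑ j, Real.exp (U / ε) * b j := by
        apply Finset.sum_le_sum
        intro j _
        have h1 : c j / ε ≤ U / ε := by
          rw [div_le_div_iff₀ hε hε]; nlinarith [hU j]
        exact mul_le_mul_of_nonneg_right (Real.exp_le_exp.mpr h1) (hb j).le
    _ = Real.exp (U / ε) := by rw [← Finset.mul_sum, hb1, mul_one]


lemma neg_log_sum_bounds {n : ℕ} (hn : 1 ≤ n) {ε : ℝ} (hε : 0 < ε) (b : Fin n → ℝ)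
    (hb : ∀ j, 0 < b j) (hb1 : ∑ j, b j = 1) (c : Fin n → ℝ) (L U : ℝ)
    (hL : ∀ j, L ≤ c j) (hU : ∀ j, c j ≤ U) :
    -U ≤ -ε * Real.log (∑ j, Real.exp (c j / ε) * b j) ∧
      -ε * Real.log (∑ j, Real.exp (c j / ε) * b j) ≤ -L := by
  have h1 := sum_exp_lower hn hε b hb hb1 c L hL
  have h2 := sum_exp_upper hn hε b hb hb1 c U hU
  have hpos : 0 < ∑ j, Real.exp (c j / ε) * b j := lt_of_lt_of_le (Real.exp_pos _) h1
  have hl1 : L / ε ≤ Real.log (∑ j, Real.exp (c j / ε) * b j) := by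
    rw [← Real.log_exp (L / ε)]
    exact Real.log_le_log (Real.exp_pos _) h1
  have hl2 : Real.log (∑ j, Real.exp (c j / ε) * b j) ≤ U / ε := by
    rw [← Real.log_exp (U / ε)]
    exact Real.log_le_log hpos h2
  have e1 : ε * (L / ε) = L := by field_simp
  have e2 : ε * (U / ε) = U := by field_simp
  constructor
  · nlinarith [mul_le_mul_of_nonneg_left hl2 hε.le]
  · nlinarith [mul_le_mul_of_nonneg_left hl1 hε.le]


lemma u_update_bound {m n : ℕ} (hm : 1 ≤ m) (hn : 1 ≤ n) {ε M : ℝ} (hε : 0 < ε) (hM : 0 ≤ M)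
    (a : Fin m → ℝ) (ha : ∀ i, 0 < a i) (ha1 : ∑ i, a i = 1)
    (b : Fin n → ℝ) (hb : ∀ j, 0 < b j) (hb1 : ∑ j, b j = 1)
    (Cm : Matrix (Fin m) (Fin n) ℝ) (hC0 : ∀ i j, 0 ≤ Cm i j) (hCM : ∀ i j, Cm i j ≤ M)
    (v : Fin n → ℝ) (u : Fin m → ℝ)
    (hu : u = fun i => -ε * Real.log (∑ j, Real.exp (-Cm i j / ε) * (Real.exp (v j / ε) * b j))
      + ε * ∑ i', a i' * Real.log (∑ j, Real.exp (-Cm i' j / ε) * (Real.exp (v j / ε) * b j))) :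
    (∀ i, |u i| ≤ M) ∧ (∑ i, a i * u i = 0) := by
  haveI : Nonempty (Fin n) := Fin.pos_iff_nonempty.mp hn
  set S : Fin m → ℝ :=
    fun i => ∑ j, Real.exp (-Cm i j / ε) * (Real.exp (v j / ε) * b j) with hSdef
  set T : ℝ := ∑ j, Real.exp (v j / ε) * b j with hTdef
  have hT : 0 < T :=
    Finset.sum_pos (fun j _ => mul_pos (Real.exp_pos _) (hb j)) Finset.univ_nonempty
  have hS : ∀ i, 0 < S i := fun i =>
    Finset.sum_pos (fun j _ => mul_pos (Real.exp_pos _) (mul_pos (Real.exp_pos _) (hb j)))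
      Finset.univ_nonempty
  have hup : ∀ i, S i ≤ T := by
    intro i
    apply Finset.sum_le_sum
    intro j _
    have h0 : -Cm i j / ε ≤ 0 := div_nonpos_of_nonpos_of_nonneg (by linarith [hC0 i j]) hε.le
    have h1 : Real.exp (-Cm i j / ε) ≤ 1 := by
      rw [← Real.exp_zero]; exact Real.exp_le_exp.mpr h0
    exact mul_le_of_le_one_left (mul_pos (Real.exp_pos _) (hb j)).le h1
  have hlo : ∀ i, Real.exp (-(M / ε)) * T ≤ S i := by
    intro i
    rw [Finset.mul_sum]
    apply Finset.sum_le_sum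
    intro j _
    apply mul_le_mul_of_nonneg_right _ (mul_pos (Real.exp_pos _) (hb j)).le
    apply Real.exp_le_exp.mpr
    rw [neg_div, neg_le_neg_iff, div_le_div_iff₀ hε hε]
    nlinarith [hCM i j]
  have hlog1 : ∀ i, Real.log (S i) ≤ Real.log T := fun i => Real.log_le_log (hS i) (hup i)
  have hlog2 : ∀ i, Real.log T - M / ε ≤ Real.log (S i) := by
    intro i
    have := Real.log_le_log (mul_pos (Real.exp_pos _) hT) (hlo i)
    rw [Real.log_mul (Real.exp_pos _).ne' hT.ne', Real.log_exp] at this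
    linarith
  have hsum_up : ∑ i', a i' * Real.log (S i') ≤ Real.log T := by
    calc ∑ i', a i' * Real.log (S i') ≤ ∑ i', a i' * Real.log T :=
          Finset.sum_le_sum fun i _ => mul_le_mul_of_nonneg_left (hlog1 i) (ha i).le
      _ = Real.log T := by rw [← Finset.sum_mul, ha1, one_mul]
  have hsum_lo : Real.log T - M / ε ≤ ∑ i', a i' * Real.log (S i') := by
    calc Real.log T - M / ε = ∑ i', a i' * (Real.log T - M / ε) := by
          rw [← Finset.sum_mul, ha1, one_mul]
      _ ≤ ∑ i', a i' * Real.log (S i') :=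
          Finset.sum_le_sum fun i _ => mul_le_mul_of_nonneg_left (hlog2 i) (ha i).le
  have eM : ε * (M / ε) = M := by field_simp
  constructor
  · intro i
    rw [hu]
    simp only
    rw [abs_le]
    constructor
    · nlinarith [mul_le_mul_of_nonneg_left (hlog1 i) hε.le,
        mul_le_mul_of_nonneg_left hsum_lo hε.le]
    · nlinarith [mul_le_mul_of_nonneg_left (hlog2 i) hε.le,
        mul_le_mul_of_nonneg_left hsum_up hε.le]
  · rw [hu]
    simp only
    have h1 : (∑ i, a i * (-ε * Real.log (S i) + ε * ∑ i', a i' * Real.log (S i')))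
        = ∑ i, (a i * (-ε * Real.log (S i)) + a i * (ε * ∑ i', a i' * Real.log (S i'))) :=
      Finset.sum_congr rfl fun i _ => mul_add _ _ _
    rw [h1, Finset.sum_add_distrib, ← Finset.sum_mul, ha1, one_mul]
    have h3 : ∑ i, a i * (-ε * Real.log (S i)) = -ε * ∑ i, a i * Real.log (S i) := by
      rw [Finset.mul_sum]
      exact Finset.sum_congr rfl fun i _ => by ring
    rw [h3]
    ring


lemma v_update_bound {m n : ℕ} (hm : 1 ≤ m) (hn : 1 ≤ n) {ε M : ℝ} (hε : 0 < ε) (hM : 0 ≤ M)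
    (a : Fin m → ℝ) (ha : ∀ i, 0 < a i) (ha1 : ∑ i, a i = 1)
    (Cm : Matrix (Fin m) (Fin n) ℝ) (hC0 : ∀ i j, 0 ≤ Cm i j) (hCM : ∀ i j, Cm i j ≤ M)
    (u : Fin m → ℝ) (huM : ∀ i, |u i| ≤ M) (v : Fin n → ℝ)
    (hv : v = fun j => -ε * Real.log (∑ i, Real.exp (-Cm i j / ε) * (Real.exp (u i / ε) * a i))) :
    ∀ j, -M ≤ v j ∧ v j ≤ 2 * M := by
  intro j
  have hmerge : ∀ i, Real.exp (-Cm i j / ε) * (Real.exp (u i / ε) * a i)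
      = Real.exp ((u i - Cm i j) / ε) * a i := by
    intro i
    rw [← mul_assoc, ← Real.exp_add, show -Cm i j / ε + u i / ε = (u i - Cm i j) / ε by ring]
  have hbd := neg_log_sum_bounds hm hε a ha ha1 (fun i => u i - Cm i j) (-(2 * M)) M
    (fun i => by
      have h := abs_le.mp (huM i); have h2 := hC0 i j; have h3 := hCM i j
      show -(2 * M) ≤ u i - Cm i j; linarith [h.1])
    (fun i => by
      have h := abs_le.mp (huM i); have h2 := hC0 i j
      show u i - Cm i j ≤ M; linarith [h.2])
  rw [hv]
  simp only
  rw [show (∑ i, Real.exp (-Cm i j / ε) * (Real.exp (u i / ε) * a i))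
      = ∑ i, Real.exp ((u i - Cm i j) / ε) * a i from Finset.sum_congr rfl fun i _ => hmerge i]
  exact ⟨hbd.1, by linarith [hbd.2]⟩


lemma matSup_bound {m n : ℕ} (A : Matrix (Fin m) (Fin n) ℝ) (i : Fin m) (j : Fin n) :
    |A i j| ≤ matSup A := by
  unfold matSup
  have h1 : |A i j| ≤ ⨆ j', |A i j'| :=
    le_ciSup (f := fun j' => |A i j'|) (Set.Finite.bddAbove (Set.finite_range _)) j
  have h2 : (⨆ j', |A i j'|) ≤ ⨆ i', ⨆ j', |A i' j'| :=
    le_ciSup (f := fun i' => ⨆ j', |A i' j'|) (Set.Finite.bddAbove (Set.finite_range _)) i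
  linarith


set_option maxHeartbeats 1000000 in
lemma descent_u {d m n : ℕ} (hm : 1 ≤ m) (hn : 1 ≤ n) (p : ℝ) {ε M : ℝ} (hε : 0 < ε)
    (hM : 0 ≤ M)
    (a : Fin m → ℝ) (ha : ∀ i, 0 < a i) (ha1 : ∑ i, a i = 1)
    (b : Fin n → ℝ) (hb : ∀ j, 0 < b j) (hb1 : ∑ j, b j = 1)
    (x : Fin m → Fin d → ℝ) (t : Fin m → ℝ) (y : Fin n → Fin d → ℝ) (s : Fin n → ℝ) (w : ℝ)
    (hC0 : ∀ i j, 0 ≤ costM p x t y s w i j) (hCM : ∀ i j, costM p x t y s w i j ≤ M)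
    (v : Fin n → ℝ) (hvL : ∀ j, -M ≤ v j)
    (u u' : Fin m → ℝ)
    (huM : ∀ i, |u i| ≤ M) (hu0 : ∑ i, a i * u i = 0)
    (hu'M : ∀ i, |u' i| ≤ M) (hu'0 : ∑ i, a i * u' i = 0)
    (hu' : u' = fun i =>
      -ε * Real.log (∑ j, Real.exp (-costM p x t y s w i j / ε) * (Real.exp (v j / ε) * b j))
      + ε * ∑ i', a i' * Real.log (∑ j, Real.exp (-costM p x t y s w i' j / ε) *
          (Real.exp (v j / ε) * b j))) :
    Real.exp (-(6 * M) / ε) / (2 * ε) * ∑ i, a i * (u i - u' i) ^ 2 ≤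
      Fobj p ε a b x t y s u v w - Fobj p ε a b x t y s u' v w := by
  haveI : Nonempty (Fin n) := Fin.pos_iff_nonempty.mp hn
  set Cm := costM p x t y s w with hCm
  set S : Fin m → ℝ := fun i => ∑ j, Real.exp ((v j - Cm i j) / ε) * b j with hSdef
  have hSi : ∀ i, (∑ j, Real.exp ((v j - Cm i j) / ε) * b j) = S i := fun i => by rw [hSdef]
  have hS : ∀ i, 0 < S i := fun i =>
    Finset.sum_pos (fun j _ => mul_pos (Real.exp_pos _) (hb j)) Finset.univ_nonempty
  have hSmerge : ∀ i, (∑ j, Real.exp (-Cm i j / ε) * (Real.exp (v j / ε) * b j)) = S i :=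
    fun i => Finset.sum_congr rfl fun j _ => by
      rw [← mul_assoc, ← Real.exp_add, show -Cm i j / ε + v j / ε = (v j - Cm i j) / ε by ring]
  have hloglo : ∀ i, -(2 * M) / ε ≤ Real.log (S i) := by
    intro i
    have hlo := sum_exp_lower hn hε b hb hb1 (fun j => v j - Cm i j) (-(2 * M))
      (fun j => by
        have := hvL j; have := hCM i j
        show -(2 * M) ≤ v j - Cm i j; linarith)
    calc -(2 * M) / ε = Real.log (Real.exp (-(2 * M) / ε)) := (Real.log_exp _).symm
      _ ≤ Real.log (S i) := Real.log_le_log (Real.exp_pos _) (le_of_le_of_eq hlo (hSi i))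
  set lam : ℝ := ε * ∑ i', a i' * Real.log (S i') with hlam
  have hlamlo : -(2 * M) ≤ lam := by
    have h1 : ∑ i', a i' * (-(2 * M) / ε) ≤ ∑ i', a i' * Real.log (S i') :=
      Finset.sum_le_sum fun i _ => mul_le_mul_of_nonneg_left (hloglo i) (ha i).le
    rw [← Finset.sum_mul, ha1, one_mul] at h1
    have h2 := mul_le_mul_of_nonneg_left h1 hε.le
    have e1 : ε * (-(2 * M) / ε) = -(2 * M) := by field_simp
    rw [hlam]; linarith
  have hu'eq : ∀ i, u' i = -ε * Real.log (S i) + lam := by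
    intro i
    rw [hu']
    simp only [hSmerge]
    rfl
  have hSval : ∀ i, S i = Real.exp ((lam - u' i) / ε) := by
    intro i
    rw [← Real.exp_log (hS i)]
    congr 1
    have h := hu'eq i
    field_simp
    linarith
  -- inner sum identities
  have hinner : ∀ (f : Fin m → ℝ) (i : Fin m),
      (∑ j, Real.exp ((f i + v j - Cm i j) / ε) * (a i * b j))
        = a i * (Real.exp (f i / ε) * S i) := by
    intro f i
    have h1 : ∀ j, Real.exp ((f i + v j - Cm i j) / ε) * (a i * b j)
        = (a i * Real.exp (f i / ε)) * (Real.exp ((v j - Cm i j) / ε) * b j) := by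
      intro j
      rw [show (f i + v j - Cm i j) / ε = f i / ε + (v j - Cm i j) / ε by ring, Real.exp_add]
      ring
    rw [Finset.sum_congr rfl fun j _ => h1 j, ← Finset.mul_sum, hSi i, mul_assoc]
  have hsum1 : ∑ i, ∑ j, Real.exp ((u i + v j - Cm i j) / ε) * (a i * b j)
      = ∑ i, a i * (Real.exp (lam / ε) * Real.exp ((u i - u' i) / ε)) := by
    refine Finset.sum_congr rfl fun i _ => ?_
    rw [hinner u i, hSval i, ← Real.exp_add, ← Real.exp_add,
      show u i / ε + (lam - u' i) / ε = lam / ε + (u i - u' i) / ε by ring]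
  have hsum2 : ∑ i, ∑ j, Real.exp ((u' i + v j - Cm i j) / ε) * (a i * b j)
      = ∑ i, a i * Real.exp (lam / ε) := by
    refine Finset.sum_congr rfl fun i _ => ?_
    rw [hinner u' i, hSval i, ← Real.exp_add,
      show u' i / ε + (lam - u' i) / ε = lam / ε by ring]
  -- expansion of the per-term remainder
  have hexp1 : ∑ i, ε * (a i * (Real.exp (lam / ε) *
        (Real.exp ((u i - u' i) / ε) - 1 - (u i - u' i) / ε)))
      = ε * (∑ i, a i * (Real.exp (lam / ε) * Real.exp ((u i - u' i) / ε)))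
        - ε * (∑ i, a i * Real.exp (lam / ε))
        - Real.exp (lam / ε) * (∑ i, a i * (u i - u' i)) := by
    rw [Finset.mul_sum, Finset.mul_sum, Finset.mul_sum, ← Finset.sum_sub_distrib,
      ← Finset.sum_sub_distrib]
    refine Finset.sum_congr rfl fun i _ => ?_
    field_simp
  have hdsum : ∑ i, a i * (u i - u' i) = 0 := by
    have : ∑ i, a i * (u i - u' i) = ∑ i, a i * u i - ∑ i, a i * u' i := by
      rw [← Finset.sum_sub_distrib]
      exact Finset.sum_congr rfl fun i _ => by ring
    rw [this, hu0, hu'0]; ring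
  have hc1 : ∑ i, u i * a i = ∑ i, a i * u i :=
    Finset.sum_congr rfl fun i _ => mul_comm _ _
  have hc2 : ∑ i, u' i * a i = ∑ i, a i * u' i :=
    Finset.sum_congr rfl fun i _ => mul_comm _ _
  -- the F-difference identity
  have hFu : Fobj p ε a b x t y s u v w - Fobj p ε a b x t y s u' v w
      = ∑ i, ε * (a i * (Real.exp (lam / ε) *
          (Real.exp ((u i - u' i) / ε) - 1 - (u i - u' i) / ε))) := by
    simp only [Fobj, ← hCm]
    rw [hsum1, hsum2, hexp1, hdsum, hc1, hc2, hu0, hu'0]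
    ring
  -- per-term lower bound
  have hkey : ∀ i, Real.exp (-(6 * M) / ε) / (2 * ε) * (a i * (u i - u' i) ^ 2)
      ≤ ε * (a i * (Real.exp (lam / ε) *
          (Real.exp ((u i - u' i) / ε) - 1 - (u i - u' i) / ε))) := by
    intro i
    set θ : ℝ := (u i - u' i) / ε with hθdef
    have hδ : u i - u' i = ε * θ := by rw [hθdef]; field_simp
    have hθlb := aux_exp_ge θ
    have hδlo : -(2 * M) ≤ u i - u' i := by
      have h1 := abs_le.mp (huM i); have h2 := abs_le.mp (hu'M i); linarith [h1.1, h2.2]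
    have hE : Real.exp (-(6 * M) / ε) ≤ Real.exp (lam / ε) * Real.exp (min 0 θ) := by
      rw [← Real.exp_add]
      apply Real.exp_le_exp.mpr
      have h2 : -(2 * M) / ε ≤ min 0 θ := by
        apply le_min
        · exact div_nonpos_of_nonpos_of_nonneg (by linarith) hε.le
        · rw [hθdef, div_le_div_iff₀ hε hε]; nlinarith
      have h1 : -(2 * M) / ε ≤ lam / ε := by
        rw [div_le_div_iff₀ hε hε]; nlinarith
      have h3 : -(6 * M) / ε ≤ -(2 * M) / ε + -(2 * M) / ε := by
        rw [← add_div, div_le_div_iff₀ hε hε]; nlinarith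
      linarith
    have s1 : Real.exp (-(6 * M) / ε) * (θ ^ 2 / 2)
        ≤ Real.exp (lam / ε) * (Real.exp θ - 1 - θ) := by
      calc Real.exp (-(6 * M) / ε) * (θ ^ 2 / 2)
          ≤ (Real.exp (lam / ε) * Real.exp (min 0 θ)) * (θ ^ 2 / 2) :=
            mul_le_mul_of_nonneg_right hE (by positivity)
        _ = Real.exp (lam / ε) * (Real.exp (min 0 θ) * θ ^ 2 / 2) := by ring
        _ ≤ Real.exp (lam / ε) * (Real.exp θ - 1 - θ) :=
            mul_le_mul_of_nonneg_left hθlb (Real.exp_pos _).le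
    rw [hδ, div_mul_eq_mul_div, div_le_iff₀ (by positivity : (0:ℝ) < 2 * ε)]
    nlinarith [mul_le_mul_of_nonneg_left s1 (show (0:ℝ) ≤ 2 * ε ^ 2 * a i from mul_nonneg (by positivity) (ha i).le)]
  calc Real.exp (-(6 * M) / ε) / (2 * ε) * ∑ i, a i * (u i - u' i) ^ 2
      = ∑ i, Real.exp (-(6 * M) / ε) / (2 * ε) * (a i * (u i - u' i) ^ 2) := by
        rw [Finset.mul_sum]
    _ ≤ ∑ i, ε * (a i * (Real.exp (lam / ε) *
          (Real.exp ((u i - u' i) / ε) - 1 - (u i - u' i) / ε))) :=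
        Finset.sum_le_sum fun i _ => hkey i
    _ = Fobj p ε a b x t y s u v w - Fobj p ε a b x t y s u' v w := hFu.symm


set_option maxHeartbeats 1000000 in
lemma descent_v {d m n : ℕ} (hm : 1 ≤ m) (hn : 1 ≤ n) (p : ℝ) {ε M : ℝ} (hε : 0 < ε)
    (hM : 0 ≤ M)
    (a : Fin m → ℝ) (ha : ∀ i, 0 < a i) (ha1 : ∑ i, a i = 1)
    (b : Fin n → ℝ) (hb : ∀ j, 0 < b j) (hb1 : ∑ j, b j = 1)
    (x : Fin m → Fin d → ℝ) (t : Fin m → ℝ) (y : Fin n → Fin d → ℝ) (s : Fin n → ℝ) (w : ℝ)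
    (hC0 : ∀ i j, 0 ≤ costM p x t y s w i j) (hCM : ∀ i j, costM p x t y s w i j ≤ M)
    (u : Fin m → ℝ) (huM : ∀ i, |u i| ≤ M)
    (v v' : Fin n → ℝ) (hvL : ∀ j, -M ≤ v j) (hv'U : ∀ j, v' j ≤ 2 * M)
    (hv' : v' = fun j =>
      -ε * Real.log (∑ i, Real.exp (-costM p x t y s w i j / ε) * (Real.exp (u i / ε) * a i))) :
    Real.exp (-(6 * M) / ε) / (2 * ε) * ∑ j, b j * (v j - v' j) ^ 2 ≤
      Fobj p ε a b x t y s u v w - Fobj p ε a b x t y s u v' w := by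
  haveI : Nonempty (Fin m) := Fin.pos_iff_nonempty.mp hm
  set Cm := costM p x t y s w with hCm
  set B : Fin n → ℝ := fun j => ∑ i, Real.exp ((u i - Cm i j) / ε) * a i with hBdef
  have hBi : ∀ j, (∑ i, Real.exp ((u i - Cm i j) / ε) * a i) = B j := fun j => by rw [hBdef]
  have hB : ∀ j, 0 < B j := fun j =>
    Finset.sum_pos (fun i _ => mul_pos (Real.exp_pos _) (ha i)) Finset.univ_nonempty
  have hBmerge : ∀ j, (∑ i, Real.exp (-Cm i j / ε) * (Real.exp (u i / ε) * a i)) = B j :=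
    fun j => Finset.sum_congr rfl fun i _ => by
      rw [← mul_assoc, ← Real.exp_add, show -Cm i j / ε + u i / ε = (u i - Cm i j) / ε by ring]
  have hv'eq : ∀ j, v' j = -ε * Real.log (B j) := by
    intro j
    rw [hv']
    simp only [hBmerge]
  have hBval : ∀ j, B j = Real.exp (-v' j / ε) := by
    intro j
    rw [← Real.exp_log (hB j)]
    congr 1
    have h := hv'eq j
    field_simp
    linarith
  have hinner : ∀ (g : Fin n → ℝ) (j : Fin n),
      (∑ i, Real.exp ((u i + g j - Cm i j) / ε) * (a i * b j))
        = b j * (Real.exp (g j / ε) * B j) := by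
    intro g j
    have h1 : ∀ i, Real.exp ((u i + g j - Cm i j) / ε) * (a i * b j)
        = (b j * Real.exp (g j / ε)) * (Real.exp ((u i - Cm i j) / ε) * a i) := by
      intro i
      rw [show (u i + g j - Cm i j) / ε = g j / ε + (u i - Cm i j) / ε by ring, Real.exp_add]
      ring
    rw [Finset.sum_congr rfl fun i _ => h1 i, ← Finset.mul_sum, hBi j, mul_assoc]
  have hsum1 : ∑ i, ∑ j, Real.exp ((u i + v j - Cm i j) / ε) * (a i * b j)
      = ∑ j, b j * Real.exp ((v j - v' j) / ε) := by
    rw [Finset.sum_comm]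
    refine Finset.sum_congr rfl fun j _ => ?_
    rw [hinner v j, hBval j, ← Real.exp_add,
      show v j / ε + -v' j / ε = (v j - v' j) / ε by ring]
  have hsum2 : ∑ i, ∑ j, Real.exp ((u i + v' j - Cm i j) / ε) * (a i * b j)
      = ∑ j, b j := by
    rw [Finset.sum_comm]
    refine Finset.sum_congr rfl fun j _ => ?_
    rw [hinner v' j, hBval j, ← Real.exp_add,
      show v' j / ε + -v' j / ε = 0 by ring, Real.exp_zero, mul_one]
  have hexp1 : ∑ j, ε * (b j * (Real.exp ((v j - v' j) / ε) - 1 - (v j - v' j) / ε))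
      = ε * (∑ j, b j * Real.exp ((v j - v' j) / ε)) - ε * (∑ j, b j)
        - (∑ j, b j * (v j - v' j)) := by
    rw [Finset.mul_sum, Finset.mul_sum, ← Finset.sum_sub_distrib, ← Finset.sum_sub_distrib]
    refine Finset.sum_congr rfl fun j _ => ?_
    field_simp
  have hd2 : ∑ j, b j * (v j - v' j) = ∑ j, v j * b j - ∑ j, v' j * b j := by
    rw [← Finset.sum_sub_distrib]
    exact Finset.sum_congr rfl fun j _ => by ring
  have hFv : Fobj p ε a b x t y s u v w - Fobj p ε a b x t y s u v' w
      = ∑ j, ε * (b j * (Real.exp ((v j - v' j) / ε) - 1 - (v j - v' j) / ε)) := by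
    simp only [Fobj, ← hCm]
    rw [hsum1, hsum2, hexp1, hd2]
    ring
  have hkey : ∀ j, Real.exp (-(6 * M) / ε) / (2 * ε) * (b j * (v j - v' j) ^ 2)
      ≤ ε * (b j * (Real.exp ((v j - v' j) / ε) - 1 - (v j - v' j) / ε)) := by
    intro j
    set θ : ℝ := (v j - v' j) / ε with hθdef
    have hδ : v j - v' j = ε * θ := by rw [hθdef]; field_simp
    have hθlb := aux_exp_ge θ
    have hδlo : -(3 * M) ≤ v j - v' j := by
      have h1 := hvL j; have h2 := hv'U j; linarith
    have hE : Real.exp (-(6 * M) / ε) ≤ Real.exp (min 0 θ) := by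
      apply Real.exp_le_exp.mpr
      apply le_min
      · exact div_nonpos_of_nonpos_of_nonneg (by linarith) hε.le
      · rw [hθdef, div_le_div_iff₀ hε hε]; nlinarith
    have s1 : Real.exp (-(6 * M) / ε) * (θ ^ 2 / 2) ≤ Real.exp θ - 1 - θ := by
      calc Real.exp (-(6 * M) / ε) * (θ ^ 2 / 2)
          ≤ Real.exp (min 0 θ) * (θ ^ 2 / 2) :=
            mul_le_mul_of_nonneg_right hE (by positivity)
        _ = Real.exp (min 0 θ) * θ ^ 2 / 2 := by ring
        _ ≤ Real.exp θ - 1 - θ := hθlb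
    rw [hδ, div_mul_eq_mul_div, div_le_iff₀ (by positivity : (0:ℝ) < 2 * ε)]
    nlinarith [mul_le_mul_of_nonneg_left s1
      (show (0:ℝ) ≤ 2 * ε ^ 2 * b j from mul_nonneg (by positivity) (hb j).le)]
  calc Real.exp (-(6 * M) / ε) / (2 * ε) * ∑ j, b j * (v j - v' j) ^ 2
      = ∑ j, Real.exp (-(6 * M) / ε) / (2 * ε) * (b j * (v j - v' j) ^ 2) := by
        rw [Finset.mul_sum]
    _ ≤ ∑ j, ε * (b j * (Real.exp ((v j - v' j) / ε) - 1 - (v j - v' j) / ε)) :=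
        Finset.sum_le_sum fun j _ => hkey j
    _ = Fobj p ε a b x t y s u v w - Fobj p ε a b x t y s u v' w := hFv.symm


lemma proj_step (η g w w' : ℝ) (hη : 0 < η) (hw : w ∈ Set.Icc (0:ℝ) 1)
    (hw' : w' = min 1 (max 0 (w - η * g))) : g * (w' - w) ≤ -(1 / η) * (w' - w) ^ 2 := by
  obtain ⟨hw0, hw1⟩ := hw
  rcases le_total (w - η * g) 0 with hz | hz
  · have h1 : max 0 (w - η * g) = 0 := max_eq_left hz
    have h2 : w' = 0 := by rw [hw', h1]; exact min_eq_right zero_le_one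
    rw [h2]
    have hg : w ≤ η * g := by linarith
    have key : w ^ 2 / η ≤ g * w := by
      rw [div_le_iff₀ hη]
      nlinarith [mul_le_mul_of_nonneg_right hg hw0]
    have e0 : -(1 / η) * (0 - w) ^ 2 = -(w ^ 2 / η) := by ring
    rw [e0]
    nlinarith [key]
  · rcases le_total 1 (w - η * g) with hz1 | hz1
    · have h1 : max 0 (w - η * g) = w - η * g := max_eq_right hz
      have h2 : w' = 1 := by rw [hw', h1]; exact min_eq_left hz1
      rw [h2]
      have hg : η * g ≤ w - 1 := by linarith
      have key : (1 - w) ^ 2 / η ≤ -(g * (1 - w)) := by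
        rw [div_le_iff₀ hη]
        nlinarith [mul_le_mul_of_nonneg_right hg (show (0:ℝ) ≤ 1 - w by linarith)]
      have e0 : -(1 / η) * (1 - w) ^ 2 = -((1 - w) ^ 2 / η) := by ring
      rw [e0]
      nlinarith [key]
    · have h1 : max 0 (w - η * g) = w - η * g := max_eq_right hz
      have h2 : w' = w - η * g := by rw [hw', h1]; exact min_eq_right hz1
      rw [h2]
      have key : (1 / η) * (w - η * g - w) ^ 2 = η * g ^ 2 := by field_simp; ring
      nlinarith [key]


set_option maxHeartbeats 1000000 in
lemma descent_w {d m n : ℕ} (hm : 1 ≤ m) (hn : 1 ≤ n) (p : ℝ) {ε M N : ℝ} (hε : 0 < ε)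
    (hM : 0 ≤ M) (hN : 0 ≤ N)
    (a : Fin m → ℝ) (ha : ∀ i, 0 < a i) (ha1 : ∑ i, a i = 1)
    (b : Fin n → ℝ) (hb : ∀ j, 0 < b j) (hb1 : ∑ j, b j = 1)
    (x : Fin m → Fin d → ℝ) (t : Fin m → ℝ) (y : Fin n → Fin d → ℝ) (s : Fin n → ℝ)
    (w w' : ℝ)
    (hC0 : ∀ i j, 0 ≤ costM p x t y s w i j) (hC0' : ∀ i j, 0 ≤ costM p x t y s w' i j)
    (hCt : ∀ i j, |tildeC p x t y s i j| ≤ N)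
    (u : Fin m → ℝ) (huU : ∀ i, u i ≤ M)
    (v : Fin n → ℝ) (hvU : ∀ j, v j ≤ 2 * M) :
    -(gradW p ε a b x t y s u v w) * (w' - w)
        - (N ^ 2 * Real.exp (3 * M / ε) / (2 * ε)) * (w' - w) ^ 2 ≤
      Fobj p ε a b x t y s u v w - Fobj p ε a b x t y s u v w' := by
  have hrel : ∀ i j, costM p x t y s w' i j
      = costM p x t y s w i j + (w' - w) * tildeC p x t y s i j := by
    intro i j
    simp only [costM, tildeC]
    ring
  set Δ : ℝ := w' - w with hΔ
  -- per-term bound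
  have key : ∀ i j,
      Real.exp ((u i + v j - costM p x t y s w' i j) / ε)
        ≤ Real.exp ((u i + v j - costM p x t y s w i j) / ε)
          + Real.exp ((u i + v j - costM p x t y s w i j) / ε) * (-(Δ * tildeC p x t y s i j) / ε)
          + Real.exp (3 * M / ε) * ((N ^ 2 * Δ ^ 2) / ε ^ 2) / 2 := by
    intro i j
    set E : ℝ := (u i + v j - costM p x t y s w i j) / ε with hE
    set θ : ℝ := -(Δ * tildeC p x t y s i j) / ε with hθ
    have hE' : (u i + v j - costM p x t y s w' i j) / ε = E + θ := by
      rw [hE, hθ, hrel i j]; ring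
    rw [hE', Real.exp_add]
    have h1 : Real.exp E * (Real.exp θ - 1 - θ) ≤ Real.exp E * (Real.exp (max 0 θ) * θ ^ 2 / 2) :=
      mul_le_mul_of_nonneg_left (aux_exp_le θ) (Real.exp_pos _).le
    have hE3 : E ≤ 3 * M / ε := by
      rw [hE, div_le_div_iff₀ hε hε]
      nlinarith [huU i, hvU j, hC0 i j]
    have hE3' : E + θ ≤ 3 * M / ε := by
      rw [← hE', div_le_div_iff₀ hε hε]
      nlinarith [huU i, hvU j, hC0' i j]
    have hmax : E + max 0 θ ≤ 3 * M / ε := by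
      rcases le_total θ 0 with h | h
      · rw [max_eq_left h]; linarith
      · rw [max_eq_right h]; linarith
    have hc2 : (tildeC p x t y s i j) ^ 2 ≤ N ^ 2 := by
      nlinarith [hCt i j, abs_nonneg (tildeC p x t y s i j), sq_abs (tildeC p x t y s i j)]
    have hθsq : θ ^ 2 ≤ (N ^ 2 * Δ ^ 2) / ε ^ 2 := by
      rw [hθ, div_pow, div_le_div_iff₀ (by positivity) (by positivity)]
      nlinarith [mul_le_mul_of_nonneg_left hc2
        (show (0:ℝ) ≤ Δ ^ 2 * ε ^ 2 by positivity), sq_nonneg (Δ * tildeC p x t y s i j)]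
    have h2 : Real.exp E * (Real.exp (max 0 θ) * θ ^ 2 / 2)
        ≤ Real.exp (3 * M / ε) * ((N ^ 2 * Δ ^ 2) / ε ^ 2) / 2 := by
      calc Real.exp E * (Real.exp (max 0 θ) * θ ^ 2 / 2)
          = Real.exp (E + max 0 θ) * θ ^ 2 / 2 := by rw [Real.exp_add]; ring
        _ ≤ Real.exp (3 * M / ε) * θ ^ 2 / 2 := by
            have := Real.exp_le_exp.mpr hmax
            have hθ2 : (0:ℝ) ≤ θ ^ 2 := sq_nonneg θ
            nlinarith
        _ ≤ Real.exp (3 * M / ε) * ((N ^ 2 * Δ ^ 2) / ε ^ 2) / 2 := by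
            have := Real.exp_pos (3 * M / ε)
            nlinarith
    linarith [h1, h2]
  -- multiply by the positive weights and sum
  have key2 : ∀ i j,
      Real.exp ((u i + v j - costM p x t y s w' i j) / ε) * (a i * b j)
        ≤ Real.exp ((u i + v j - costM p x t y s w i j) / ε) * (a i * b j)
          + (Real.exp ((u i + v j - costM p x t y s w i j) / ε)
              * (-(Δ * tildeC p x t y s i j) / ε)) * (a i * b j)
          + (Real.exp (3 * M / ε) * ((N ^ 2 * Δ ^ 2) / ε ^ 2) / 2) * (a i * b j) := by
    intro i j
    have h := mul_le_mul_of_nonneg_right (key i j)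
      (show (0:ℝ) ≤ a i * b j from (mul_pos (ha i) (hb j)).le)
    nlinarith [h]
  have hsum : ∑ i, ∑ j, Real.exp ((u i + v j - costM p x t y s w' i j) / ε) * (a i * b j)
      ≤ (∑ i, ∑ j, Real.exp ((u i + v j - costM p x t y s w i j) / ε) * (a i * b j))
        + (∑ i, ∑ j, (Real.exp ((u i + v j - costM p x t y s w i j) / ε)
            * (-(Δ * tildeC p x t y s i j) / ε)) * (a i * b j))
        + (∑ i, ∑ j, (Real.exp (3 * M / ε) * ((N ^ 2 * Δ ^ 2) / ε ^ 2) / 2) * (a i * b j)) := by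
    rw [← Finset.sum_add_distrib, ← Finset.sum_add_distrib]
    apply Finset.sum_le_sum
    intro i _
    rw [← Finset.sum_add_distrib, ← Finset.sum_add_distrib]
    exact Finset.sum_le_sum fun j _ => key2 i j
  have hab : ∑ i, ∑ j, (a i * b j) = 1 := by
    rw [← Finset.sum_mul_sum, ha1, hb1, one_mul]
  have hK : ∑ i, ∑ j, (Real.exp (3 * M / ε) * ((N ^ 2 * Δ ^ 2) / ε ^ 2) / 2) * (a i * b j)
      = Real.exp (3 * M / ε) * ((N ^ 2 * Δ ^ 2) / ε ^ 2) / 2 := by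
    have h1 : ∑ i, ∑ j, (Real.exp (3 * M / ε) * ((N ^ 2 * Δ ^ 2) / ε ^ 2) / 2) * (a i * b j)
        = (Real.exp (3 * M / ε) * ((N ^ 2 * Δ ^ 2) / ε ^ 2) / 2) * ∑ i, ∑ j, (a i * b j) := by
      rw [Finset.mul_sum]
      exact Finset.sum_congr rfl fun i _ => by rw [Finset.mul_sum]
    rw [h1, hab, mul_one]
  have hTh : ∑ i, ∑ j, (Real.exp ((u i + v j - costM p x t y s w i j) / ε)
        * (-(Δ * tildeC p x t y s i j) / ε)) * (a i * b j)
      = -(Δ / ε) * ∑ i, ∑ j, tildeC p x t y s i j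
          * Real.exp ((u i + v j - costM p x t y s w i j) / ε) * (a i * b j) := by
    rw [Finset.mul_sum]
    refine Finset.sum_congr rfl fun i _ => ?_
    rw [Finset.mul_sum]
    exact Finset.sum_congr rfl fun j _ => by ring
  rw [hK, hTh] at hsum
  simp only [Fobj, gradW]
  have e2 : ε * (-(Δ / ε) * ∑ i, ∑ j, tildeC p x t y s i j
      * Real.exp ((u i + v j - costM p x t y s w i j) / ε) * (a i * b j))
      = -(Δ * ∑ i, ∑ j, tildeC p x t y s i j
      * Real.exp ((u i + v j - costM p x t y s w i j) / ε) * (a i * b j)) := by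
    field_simp
  have e3 : ε * (Real.exp (3 * M / ε) * ((N ^ 2 * Δ ^ 2) / ε ^ 2) / 2)
      = (N ^ 2 * Real.exp (3 * M / ε) / (2 * ε)) * Δ ^ 2 := by
    field_simp
  nlinarith [mul_le_mul_of_nonneg_left hsum hε.le, e2, e3]



set_option maxHeartbeats 1000000 in
/-- Sufficient descent for consecutive HBCD iterates with stepsize
`η = (ε/‖C̃‖_∞²) exp(−6‖C‖_∞/ε)`:
`F(ζ^k) − F(ζ^{k+1}) ≥ κ(‖u^k − u^{k+1}‖²_{L²(a)} + ‖v^k − v^{k+1}‖²_{L²(b)}) + τ|w^k − w^{k+1}|²`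
with `κ = exp(−6‖C‖_∞/ε)/(2ε)` and `τ = ‖C̃‖_∞² exp(6‖C‖_∞/ε)/(2ε)`. -/
theorem HBCD_sufficient_descent {d m n : ℕ} (hm : 1 ≤ m) (hn : 1 ≤ n)
    (p ε η : ℝ) (hp : 1 ≤ p) (hε : 0 < ε)
    (a : Fin m → ℝ) (b : Fin n → ℝ)
    (ha : ∀ i, 0 < a i) (ha1 : ∑ i, a i = 1) (hb : ∀ j, 0 < b j) (hb1 : ∑ j, b j = 1)
    (x : Fin m → Fin d → ℝ) (t : Fin m → ℝ) (y : Fin n → Fin d → ℝ) (s : Fin n → ℝ)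
    (hη : η = (ε / matSup (tildeC p x t y s) ^ 2) *
      Real.exp (-(6 * CsupNorm p x t y s) / ε))
    (u : ℕ → Fin m → ℝ) (v : ℕ → Fin n → ℝ) (w : ℕ → ℝ)
    (hw0 : w 0 ∈ Set.Icc (0 : ℝ) 1)
    (hseq : HBCDseq p ε η a b x t y s u v w) :
    ∀ k ≥ 1,
      Fobj p ε a b x t y s (u k) (v k) (w k) -
          Fobj p ε a b x t y s (u (k + 1)) (v (k + 1)) (w (k + 1)) ≥
        (Real.exp (-(6 * CsupNorm p x t y s) / ε) / (2 * ε)) *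
            ((∑ i, a i * (u k i - u (k + 1) i) ^ 2) +
              (∑ j, b j * (v k j - v (k + 1) j) ^ 2)) +
          (matSup (tildeC p x t y s) ^ 2 *
              Real.exp (6 * CsupNorm p x t y s / ε) / (2 * ε)) *
            (w k - w (k + 1)) ^ 2 := by
  intro k hk
  obtain ⟨k', rfl⟩ : ∃ k', k = k' + 1 := ⟨k - 1, (Nat.succ_pred_eq_of_pos hk).symm⟩
  haveI hmne : Nonempty (Fin m) := Fin.pos_iff_nonempty.mp hm
  haveI hnne : Nonempty (Fin n) := Fin.pos_iff_nonempty.mp hn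
  set M := CsupNorm p x t y s with hMdef
  set N := matSup (tildeC p x t y s) with hNdef
  have i0 : Fin m := ⟨0, hm⟩
  have j0 : Fin n := ⟨0, hn⟩
  have hA0 : ∀ (i : Fin m) (j : Fin n), 0 ≤ ∑ l, |x i l - y j l| ^ p := fun i j =>
    Finset.sum_nonneg fun l _ => Real.rpow_nonneg (abs_nonneg _) p
  have hB0 : ∀ (i : Fin m) (j : Fin n), 0 ≤ |t i - s j| ^ p := fun i j =>
    Real.rpow_nonneg (abs_nonneg _) p
  have hmatA : ∀ (i : Fin m) (j : Fin n), (∑ l, |x i l - y j l| ^ p) ≤ M := by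
    intro i j
    have h1 : (∑ l, |x i l - y j l| ^ p) = costM p x t y s 1 i j := by
      simp [costM]
    have h2 := matSup_bound (costM p x t y s 1) i j
    have h3 : matSup (costM p x t y s 1) ≤ M := by rw [hMdef]; exact le_max_right _ _
    calc (∑ l, |x i l - y j l| ^ p) ≤ |costM p x t y s 1 i j| := h1 ▸ le_abs_self _
      _ ≤ M := le_trans h2 h3
  have hmatB : ∀ (i : Fin m) (j : Fin n), |t i - s j| ^ p ≤ M := by
    intro i j
    have h1 : |t i - s j| ^ p = costM p x t y s 0 i j := by
      simp [costM]
    have h2 := matSup_bound (costM p x t y s 0) i j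
    have h3 : matSup (costM p x t y s 0) ≤ M := by rw [hMdef]; exact le_max_left _ _
    calc |t i - s j| ^ p ≤ |costM p x t y s 0 i j| := h1 ▸ le_abs_self _
      _ ≤ M := le_trans h2 h3
  have hM0 : 0 ≤ M := le_trans (hB0 i0 j0) (hmatB i0 j0)
  have hN0 : 0 ≤ N := le_trans (abs_nonneg _) (matSup_bound (tildeC p x t y s) i0 j0)
  have hCb : ∀ ω, ω ∈ Set.Icc (0:ℝ) 1 → ∀ (i : Fin m) (j : Fin n),
      0 ≤ costM p x t y s ω i j ∧ costM p x t y s ω i j ≤ M := by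
    intro ω hω i j
    simp only [costM]
    constructor
    · nlinarith [hA0 i j, hB0 i j, hω.1, hω.2]
    · nlinarith [hmatA i j, hmatB i j, hA0 i j, hB0 i j, hω.1, hω.2]
  have hwIcc : ∀ j, w j ∈ Set.Icc (0:ℝ) 1 := by
    intro j
    induction j with
    | zero => exact hw0
    | succ j ih =>
      rw [(hseq j).2.2]
      exact ⟨le_min zero_le_one (le_max_left _ _), min_le_left _ _⟩
  obtain ⟨huKM, huK0⟩ := u_update_bound hm hn hε hM0 a ha ha1 b hb hb1
    (costM p x t y s (w k')) (fun i j => (hCb _ (hwIcc k') i j).1)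
    (fun i j => (hCb _ (hwIcc k') i j).2) (v k') (u (k' + 1)) (hseq k').1
  have hvK := v_update_bound hm hn hε hM0 a ha ha1
    (costM p x t y s (w k')) (fun i j => (hCb _ (hwIcc k') i j).1)
    (fun i j => (hCb _ (hwIcc k') i j).2) (u (k' + 1)) huKM (v (k' + 1)) (hseq k').2.1
  obtain ⟨huK1M, huK10⟩ := u_update_bound hm hn hε hM0 a ha ha1 b hb hb1
    (costM p x t y s (w (k' + 1))) (fun i j => (hCb _ (hwIcc (k' + 1)) i j).1)
    (fun i j => (hCb _ (hwIcc (k' + 1)) i j).2) (v (k' + 1)) (u (k' + 1 + 1)) (hseq (k' + 1)).1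
  have hvK1 := v_update_bound hm hn hε hM0 a ha ha1
    (costM p x t y s (w (k' + 1))) (fun i j => (hCb _ (hwIcc (k' + 1)) i j).1)
    (fun i j => (hCb _ (hwIcc (k' + 1)) i j).2) (u (k' + 1 + 1)) huK1M
    (v (k' + 1 + 1)) (hseq (k' + 1)).2.1
  have d1 := descent_u hm hn p hε hM0 a ha ha1 b hb hb1 x t y s (w (k' + 1))
    (fun i j => (hCb _ (hwIcc (k' + 1)) i j).1) (fun i j => (hCb _ (hwIcc (k' + 1)) i j).2)
    (v (k' + 1)) (fun j => (hvK j).1) (u (k' + 1)) (u (k' + 1 + 1))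
    huKM huK0 huK1M huK10 (hseq (k' + 1)).1
  have d2 := descent_v hm hn p hε hM0 a ha ha1 b hb hb1 x t y s (w (k' + 1))
    (fun i j => (hCb _ (hwIcc (k' + 1)) i j).1) (fun i j => (hCb _ (hwIcc (k' + 1)) i j).2)
    (u (k' + 1 + 1)) huK1M (v (k' + 1)) (v (k' + 1 + 1)) (fun j => (hvK j).1)
    (fun j => (hvK1 j).2) (hseq (k' + 1)).2.1
  have d3 := descent_w hm hn p hε hM0 hN0 a ha ha1 b hb hb1 x t y s
    (w (k' + 1)) (w (k' + 1 + 1))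
    (fun i j => (hCb _ (hwIcc (k' + 1)) i j).1) (fun i j => (hCb _ (hwIcc (k' + 1 + 1)) i j).1)
    (fun i j => matSup_bound (tildeC p x t y s) i j)
    (u (k' + 1 + 1)) (fun i => (abs_le.mp (huK1M i)).2)
    (v (k' + 1 + 1)) (fun j => (hvK1 j).2)
  have hw_part : (N ^ 2 * Real.exp (6 * M / ε) / (2 * ε)) * (w (k' + 1) - w (k' + 1 + 1)) ^ 2 ≤
      Fobj p ε a b x t y s (u (k' + 1 + 1)) (v (k' + 1 + 1)) (w (k' + 1)) -
        Fobj p ε a b x t y s (u (k' + 1 + 1)) (v (k' + 1 + 1)) (w (k' + 1 + 1)) := by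
    rcases eq_or_lt_of_le hN0 with hNz | hNpos
    · have hη0 : η = 0 := by
        rw [hη, ← hNz]
        norm_num
      have hww : w (k' + 1 + 1) = w (k' + 1) := by
        rw [(hseq (k' + 1)).2.2, hη0, zero_mul, sub_zero,
          max_eq_right (hwIcc (k' + 1)).1, min_eq_right (hwIcc (k' + 1)).2]
      rw [hww]
      simp
    · have hηpos : 0 < η := by
        rw [hη]
        exact mul_pos (div_pos hε (pow_pos hNpos 2)) (Real.exp_pos _)
      have hproj := proj_step η
        (gradW p ε a b x t y s (u (k' + 1 + 1)) (v (k' + 1 + 1)) (w (k' + 1)))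
        (w (k' + 1)) (w (k' + 1 + 1)) hηpos (hwIcc (k' + 1)) (hseq (k' + 1)).2.2
      have hexp6 : Real.exp (-(6 * M) / ε) * Real.exp (6 * M / ε) = 1 := by
        rw [← Real.exp_add, show -(6 * M) / ε + 6 * M / ε = 0 by ring, Real.exp_zero]
      have hmul : η * (N ^ 2 * Real.exp (6 * M / ε) / ε) = 1 := by
        calc η * (N ^ 2 * Real.exp (6 * M / ε) / ε)
            = (Real.exp (-(6 * M) / ε) * Real.exp (6 * M / ε)) * ((ε / N ^ 2) * (N ^ 2 / ε)) := by
              rw [hη]; ring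
          _ = 1 := by
              rw [hexp6, one_mul, div_mul_div_comm, mul_comm ε (N ^ 2),
                div_self (by positivity : (N : ℝ) ^ 2 * ε ≠ 0)]
      have hinv : N ^ 2 * Real.exp (6 * M / ε) / ε = 1 / η :=
        eq_one_div_of_mul_eq_one_left (by rw [mul_comm]; exact hmul)
      have hexp36 : Real.exp (3 * M / ε) ≤ Real.exp (6 * M / ε) :=
        Real.exp_le_exp.mpr (by rw [div_le_div_iff₀ hε hε]; nlinarith [hM0])
      have e4 : (N ^ 2 * Real.exp (3 * M / ε) / (2 * ε)) * (w (k' + 1 + 1) - w (k' + 1)) ^ 2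
          ≤ (N ^ 2 * Real.exp (6 * M / ε) / (2 * ε)) * (w (k' + 1 + 1) - w (k' + 1)) ^ 2 := by
        apply mul_le_mul_of_nonneg_right _ (sq_nonneg _)
        rw [div_le_div_iff₀ (by linarith) (by linarith)]
        nlinarith [mul_le_mul_of_nonneg_left hexp36
          (show (0:ℝ) ≤ N ^ 2 * (2 * ε) by positivity), hε]
      have e7 : (1 / η) * (w (k' + 1 + 1) - w (k' + 1)) ^ 2
          = 2 * ((N ^ 2 * Real.exp (6 * M / ε) / (2 * ε)) * (w (k' + 1 + 1) - w (k' + 1)) ^ 2) := by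
        rw [← hinv]
        have e6 : N ^ 2 * Real.exp (6 * M / ε) / ε
            = 2 * (N ^ 2 * Real.exp (6 * M / ε) / (2 * ε)) := by
          field_simp
        rw [e6]
        ring
      nlinarith [d3, hproj, e4, e7]
  linarith [d1, d2, hw_part]
end
end

section
/- The set S̃ of optimal solutions of the dual entropic TiOT minimization problem min{F(u,v,w) : u ∈ ℝ^m, a^⊤u = 0, v ∈ ℝ^n, w ∈ [0,1]} contains a point ξ* = (u*, v*, w*) with ‖u*‖_∞ ≤ 2‖C‖_∞ and ‖v*‖_∞ ≤ 3‖C‖_∞. -/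
open Finset Filter Topology

noncomputable section

lemma min_at_zero (c0 β A B ρ σ : ℝ) (f : ℝ → ℝ)
    (hf : ∀ τ, f τ = c0 - τ * β + A * Real.exp (ρ * τ) + B * Real.exp (σ * τ))
    (hmin : ∀ τ, f 0 ≤ f τ) : A * ρ + B * σ = β := by
  have h1 : HasDerivAt (fun τ : ℝ => ρ * τ) ρ 0 := by
    simpa using (hasDerivAt_id (0 : ℝ)).const_mul ρ
  have h2 : HasDerivAt (fun τ : ℝ => σ * τ) σ 0 := by
    simpa using (hasDerivAt_id (0 : ℝ)).const_mul σ
  have h5 : HasDerivAt (fun τ : ℝ => c0 - τ * β) (-β) 0 := by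
    simpa using ((hasDerivAt_id (0 : ℝ)).mul_const β).const_sub c0
  have hde := (h5.add (h1.exp.const_mul A)).add (h2.exp.const_mul B)
  have hd : HasDerivAt f (-β + A * (Real.exp (ρ * 0) * ρ) + B * (Real.exp (σ * 0) * σ)) 0 :=
    hde.congr_of_eventuallyEq (Filter.Eventually.of_forall hf)
  have hloc : IsLocalMin f 0 := Filter.Eventually.of_forall hmin
  have := hloc.deriv_eq_zero
  rw [hd.deriv] at this
  simp only [mul_zero, Real.exp_zero, one_mul] at this
  linarith

lemma shift_sum_v {m n : ℕ} (ε : ℝ) (hε : ε ≠ 0) (a : Fin m → ℝ) (b : Fin n → ℝ)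
    (C : Matrix (Fin m) (Fin n) ℝ) (u : Fin m → ℝ) (v : Fin n → ℝ) (j₀ : Fin n) (τ : ℝ) :
    (∑ i, ∑ j, Real.exp ((u i + (v j + if j = j₀ then τ else 0) - C i j) / ε) * (a i * b j))
      = (∑ i, ∑ j, Real.exp ((u i + v j - C i j) / ε) * (a i * b j))
        + (Real.exp ((1 / ε) * τ) - 1) *
          ∑ i, Real.exp ((u i + v j₀ - C i j₀) / ε) * (a i * b j₀) := by
  have key : ∀ (i : Fin m) (j : Fin n),
      Real.exp ((u i + (v j + if j = j₀ then τ else 0) - C i j) / ε) * (a i * b j)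
      = Real.exp ((u i + v j - C i j) / ε) * (a i * b j)
        + (if j = j₀ then (Real.exp ((1 / ε) * τ) - 1) *
            (Real.exp ((u i + v j - C i j) / ε) * (a i * b j)) else 0) := by
    intro i j
    by_cases h : j = j₀
    · subst h
      simp only [if_true, eq_self_iff_true, if_pos]
      rw [show (u i + (v j + τ) - C i j) / ε = (u i + v j - C i j) / ε + (1 / ε) * τ by
        field_simp; ring]
      rw [Real.exp_add]; ring
    · simp [h]
  calc (∑ i, ∑ j, Real.exp ((u i + (v j + if j = j₀ then τ else 0) - C i j) / ε) * (a i * b j))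
      = ∑ i, ((∑ j, Real.exp ((u i + v j - C i j) / ε) * (a i * b j))
          + (Real.exp ((1 / ε) * τ) - 1) *
            (Real.exp ((u i + v j₀ - C i j₀) / ε) * (a i * b j₀))) := by
        refine Finset.sum_congr rfl fun i _ => ?_
        simp only [key, Finset.sum_add_distrib, Finset.sum_ite_eq' univ j₀, mem_univ, if_pos]
    _ = _ := by rw [Finset.sum_add_distrib, ← Finset.mul_sum]

lemma shift_sum_u {m n : ℕ} (ε : ℝ) (hε : ε ≠ 0) (a : Fin m → ℝ) (b : Fin n → ℝ)
    (C : Matrix (Fin m) (Fin n) ℝ) (u : Fin m → ℝ) (v : Fin n → ℝ) (i₀ : Fin m) (τ : ℝ) :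
    (∑ i, ∑ j, Real.exp ((u i + τ * ((if i = i₀ then 1 / a i₀ else 0) - 1) + v j - C i j) / ε)
        * (a i * b j))
      = ((∑ i, ∑ j, Real.exp ((u i + v j - C i j) / ε) * (a i * b j))
          - ∑ j, Real.exp ((u i₀ + v j - C i₀ j) / ε) * (a i₀ * b j)) *
            Real.exp ((-(1 / ε)) * τ)
        + (∑ j, Real.exp ((u i₀ + v j - C i₀ j) / ε) * (a i₀ * b j)) *
            Real.exp (((1 / a i₀ - 1) / ε) * τ) := by
  have key : ∀ i : Fin m,
      (∑ j, Real.exp ((u i + τ * ((if i = i₀ then 1 / a i₀ else 0) - 1) + v j - C i j) / ε)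
        * (a i * b j))
      = Real.exp ((-(1 / ε)) * τ) * (∑ j, Real.exp ((u i + v j - C i j) / ε) * (a i * b j))
        + (if i = i₀ then (Real.exp (((1 / a i₀ - 1) / ε) * τ) - Real.exp ((-(1 / ε)) * τ)) *
            (∑ j, Real.exp ((u i + v j - C i j) / ε) * (a i * b j)) else 0) := by
    intro i
    by_cases h : i = i₀
    · subst h
      simp only [if_true, eq_self_iff_true, if_pos]
      rw [Finset.mul_sum, Finset.mul_sum, ← Finset.sum_add_distrib]
      refine Finset.sum_congr rfl fun j _ => ?_
      rw [show (u i + τ * (1 / a i - 1) + v j - C i j) / ε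
          = (u i + v j - C i j) / ε + ((1 / a i - 1) / ε) * τ by field_simp; ring]
      rw [Real.exp_add]; ring
    · simp only [h, if_false, add_zero]
      rw [Finset.mul_sum]
      refine Finset.sum_congr rfl fun j _ => ?_
      rw [show (u i + τ * (0 - 1) + v j - C i j) / ε
          = (u i + v j - C i j) / ε + (-(1 / ε)) * τ by field_simp; ring]
      rw [Real.exp_add]; ring
  rw [Finset.sum_congr rfl fun i _ => key i, Finset.sum_add_distrib,
    Finset.sum_ite_eq' univ i₀, ← Finset.mul_sum]
  simp only [mem_univ, if_pos]
  ring


set_option maxHeartbeats 2000000 in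
/-- The optimal solution set `S̃` of the dual entropic TiOT problem
contains a point `ξ* = (u*, v*, w*)` with `‖u*‖_∞ ≤ 2‖C‖_∞` and `‖v*‖_∞ ≤ 3‖C‖_∞`. -/
theorem optSet_contains_bounded_point {d m n : ℕ} (hm : 1 ≤ m) (hn : 1 ≤ n)
    (p ε : ℝ) (hp : 1 ≤ p) (hε : 0 < ε)
    (a : Fin m → ℝ) (b : Fin n → ℝ)
    (ha : ∀ i, 0 < a i) (ha1 : ∑ i, a i = 1) (hb : ∀ j, 0 < b j) (hb1 : ∑ j, b j = 1)
    (x : Fin m → Fin d → ℝ) (t : Fin m → ℝ) (y : Fin n → Fin d → ℝ) (s : Fin n → ℝ)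
    (hne : (optSet p ε a b x t y s).Nonempty) :
    ∃ ζ ∈ optSet p ε a b x t y s,
      (∀ i, |ζ.1 i| ≤ 2 * CsupNorm p x t y s) ∧
      (∀ j, |ζ.2.1 j| ≤ 3 * CsupNorm p x t y s) := by
  haveI : NeZero m := ⟨by omega⟩
  haveI : NeZero n := ⟨by omega⟩
  obtain ⟨⟨u, v, w⟩, hζ⟩ := hne
  refine ⟨(u, v, w), hζ, ?_⟩
  obtain ⟨⟨hu0, hw⟩, hmin⟩ := hζ
  have hεne : ε ≠ 0 := ne_of_gt hε
  set C : Matrix (Fin m) (Fin n) ℝ := costM p x t y s w with hC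
  set K : ℝ := CsupNorm p x t y s with hK
  -- entrywise bound on C(w)
  have bdd : ∀ (C' : Matrix (Fin m) (Fin n) ℝ) (i : Fin m) (j : Fin n), |C' i j| ≤ matSup C' := by
    intro C' i j
    have h1 : |C' i j| ≤ ⨆ j', |C' i j'| :=
      le_ciSup (f := fun j' => |C' i j'|) (Set.Finite.bddAbove (Set.finite_range _)) j
    exact h1.trans (le_ciSup (f := fun i' => ⨆ j', |C' i' j'|)
      (Set.Finite.bddAbove (Set.finite_range _)) i)
  have hle0 : matSup (costM p x t y s 0) ≤ K := by
    rw [hK]; simp only [CsupNorm]; exact le_max_left _ _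
  have hle1 : matSup (costM p x t y s 1) ≤ K := by
    rw [hK]; simp only [CsupNorm]; exact le_max_right _ _
  have hMC : ∀ i j, |C i j| ≤ K := by
    intro i j
    have h0 := (bdd (costM p x t y s 0) i j).trans hle0
    have h1 := (bdd (costM p x t y s 1) i j).trans hle1
    have e0 : costM p x t y s 0 i j = |t i - s j| ^ p := by simp [costM]
    have e1 : costM p x t y s 1 i j = ∑ l, |x i l - y j l| ^ p := by simp [costM]
    rw [e0] at h0; rw [e1] at h1
    obtain ⟨h0a, h0b⟩ := abs_le.mp h0
    obtain ⟨h1a, h1b⟩ := abs_le.mp h1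
    have hCij : C i j = w * (∑ l, |x i l - y j l| ^ p) + (1 - w) * |t i - s j| ^ p := rfl
    rw [hCij, abs_le]
    obtain ⟨hw0, hw1⟩ := hw
    constructor <;> nlinarith
  -- v-block stationarity
  have hQ : ∀ j₀, (∑ i, Real.exp ((u i + v j₀ - C i j₀) / ε) * a i) = 1 := by
    intro j₀
    set Aj : ℝ := ∑ i, Real.exp ((u i + v j₀ - C i j₀) / ε) * (a i * b j₀) with hAj
    have hstat : (ε * Aj) * (1 / ε) + 0 * 0 = b j₀ := by
      apply min_at_zero (Fobj p ε a b x t y s u v w - ε * Aj) (b j₀) (ε * Aj) 0 (1 / ε) 0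
        (fun τ => Fobj p ε a b x t y s u (fun j => v j + if j = j₀ then τ else 0) w)
      · intro τ
        have hlin : (∑ j, (v j + if j = j₀ then τ else 0) * b j)
            = (∑ j, v j * b j) + τ * b j₀ := by
          have hterm : ∀ j : Fin n, (v j + if j = j₀ then τ else 0) * b j
              = v j * b j + (if j = j₀ then τ * b j else 0) := by
            intro j; by_cases h : j = j₀ <;> simp [h] <;> ring
          rw [Finset.sum_congr rfl fun j _ => hterm j, Finset.sum_add_distrib,
            Finset.sum_ite_eq' univ j₀]
          simp
        simp only [Fobj]
        rw [shift_sum_v ε hεne a b C u v j₀ τ, hlin]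
        ring
      · intro τ
        have h0 : (fun j => v j + if j = j₀ then (0 : ℝ) else 0) = v := by
          funext j; simp
        rw [h0]
        exact hmin (u, fun j => v j + if j = j₀ then τ else 0, w) ⟨hu0, hw⟩
    have hA : Aj = b j₀ := by field_simp at hstat; linarith
    have hA2 : Aj = (∑ i, Real.exp ((u i + v j₀ - C i j₀) / ε) * a i) * b j₀ := by
      rw [hAj, Finset.sum_mul]
      exact Finset.sum_congr rfl fun i _ => by ring
    have := hA2.symm.trans hA
    exact mul_right_cancel₀ (ne_of_gt (hb j₀)) (by rw [this, one_mul])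
  -- total mass
  have hG : (∑ i, ∑ j, Real.exp ((u i + v j - C i j) / ε) * (a i * b j)) = 1 := by
    rw [Finset.sum_comm]
    have : ∀ j : Fin n, (∑ i, Real.exp ((u i + v j - C i j) / ε) * (a i * b j)) = b j := by
      intro j
      have : (∑ i, Real.exp ((u i + v j - C i j) / ε) * (a i * b j))
          = (∑ i, Real.exp ((u i + v j - C i j) / ε) * a i) * b j := by
        rw [Finset.sum_mul]; exact Finset.sum_congr rfl fun i _ => by ring
      rw [this, hQ j, one_mul]
    rw [Finset.sum_congr rfl fun j _ => this j, hb1]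
  -- u-block stationarity
  have hP : ∀ i₀, (∑ j, Real.exp ((u i₀ + v j - C i₀ j) / ε) * b j) = 1 := by
    intro i₀
    set g₀ : ℝ := ∑ j, Real.exp ((u i₀ + v j - C i₀ j) / ε) * (a i₀ * b j) with hg₀
    have hlinu : ∀ τ : ℝ, (∑ i, (u i + τ * ((if i = i₀ then 1 / a i₀ else 0) - 1)) * a i)
        = ∑ i, u i * a i := by
      intro τ
      have hterm : ∀ i : Fin m, (u i + τ * ((if i = i₀ then 1 / a i₀ else 0) - 1)) * a i
          = u i * a i + ((if i = i₀ then τ * ((1 / a i₀) * a i) else 0) - τ * a i) := by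
        intro i; by_cases h : i = i₀ <;> simp [h] <;> ring
      rw [Finset.sum_congr rfl fun i _ => hterm i, Finset.sum_add_distrib,
        Finset.sum_sub_distrib, Finset.sum_ite_eq' univ i₀, ← Finset.mul_sum, ha1]
      simp only [mem_univ, if_pos]
      field_simp [ne_of_gt (ha i₀)]
      ring
    have hstat : (ε * ((∑ i, ∑ j, Real.exp ((u i + v j - C i j) / ε) * (a i * b j)) - g₀))
          * (-(1 / ε)) + (ε * g₀) * ((1 / a i₀ - 1) / ε) = 0 := by
      apply min_at_zero (-(∑ i, u i * a i) - (∑ j, v j * b j) - ε) 0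
        (ε * ((∑ i, ∑ j, Real.exp ((u i + v j - C i j) / ε) * (a i * b j)) - g₀))
        (ε * g₀) (-(1 / ε)) ((1 / a i₀ - 1) / ε)
        (fun τ => Fobj p ε a b x t y s
          (fun i => u i + τ * ((if i = i₀ then 1 / a i₀ else 0) - 1)) v w)
      · intro τ
        simp only [Fobj]
        rw [shift_sum_u ε hεne a b C u v i₀ τ, hlinu τ]
        ring
      · intro τ
        have h0 : (fun i => u i + (0 : ℝ) * ((if i = i₀ then 1 / a i₀ else 0) - 1)) = u := by
          funext i; simp
        rw [h0]
        refine hmin (fun i => u i + τ * ((if i = i₀ then 1 / a i₀ else 0) - 1), v, w)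
          ⟨?_, hw⟩
        have : (∑ i, a i * (u i + τ * ((if i = i₀ then 1 / a i₀ else 0) - 1)))
            = ∑ i, (u i + τ * ((if i = i₀ then 1 / a i₀ else 0) - 1)) * a i :=
          Finset.sum_congr rfl fun i _ => mul_comm _ _
        rw [this, hlinu τ]
        rw [Finset.sum_congr rfl fun i _ => mul_comm (u i) (a i)] at *
        exact hu0
    rw [hG] at hstat
    have hg : g₀ = a i₀ := by
      have ha₀ := ne_of_gt (ha i₀)
      field_simp at hstat
      nlinarith [hstat, mul_pos hε hε]
    have hg2 : g₀ = a i₀ * (∑ j, Real.exp ((u i₀ + v j - C i₀ j) / ε) * b j) := by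
      rw [hg₀, Finset.mul_sum]
      exact Finset.sum_congr rfl fun j _ => by ring
    have := hg2.symm.trans hg
    exact mul_left_cancel₀ (ne_of_gt (ha i₀)) (by rw [this, mul_one])
  -- split exponentials
  have hsplit : ∀ (c₁ c₂ : ℝ), Real.exp ((c₁ + c₂) / ε) = Real.exp (c₁ / ε) * Real.exp (c₂ / ε) := by
    intro c₁ c₂; rw [← Real.exp_add]; congr 1; ring
  -- u bounds
  set S : Fin m → ℝ := fun i => ∑ j, Real.exp ((v j - C i j) / ε) * b j with hS
  have hSpos : ∀ i, 0 < S i := by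
    intro i
    exact Finset.sum_pos (fun j _ => mul_pos (Real.exp_pos _) (hb j)) Finset.univ_nonempty
  have hPS : ∀ i, Real.exp (u i / ε) * S i = 1 := by
    intro i
    rw [hS, Finset.mul_sum, ← hP i]
    refine Finset.sum_congr rfl fun j _ => ?_
    rw [show u i + v j - C i j = u i + (v j - C i j) by ring, hsplit]
    ring
  have hSS : ∀ i i', Real.exp (-(2 * K) / ε) * S i' ≤ S i := by
    intro i i'
    rw [hS, Finset.mul_sum]
    refine Finset.sum_le_sum fun j _ => ?_
    rw [← mul_assoc, ← Real.exp_add]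
    refine mul_le_mul_of_nonneg_right ?_ (le_of_lt (hb j))
    rw [Real.exp_le_exp, ← add_div, div_le_div_iff₀ hε hε]
    have := abs_le.mp (hMC i j)
    have := abs_le.mp (hMC i' j)
    nlinarith
  have hdiff : ∀ i i', u i ≤ u i' + 2 * K := by
    intro i i'
    have h1 : Real.exp (u i / ε) * (Real.exp (-(2 * K) / ε) * S i')
        ≤ Real.exp (u i / ε) * S i :=
      mul_le_mul_of_nonneg_left (hSS i i') (le_of_lt (Real.exp_pos _))
    rw [hPS i, ← hPS i'] at h1
    rw [← mul_assoc] at h1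
    have h2 := (mul_le_mul_iff_left₀ (hSpos i')).mp h1
    rw [← Real.exp_add] at h2
    have h3 := Real.exp_le_exp.mp h2
    rw [← add_div] at h3
    have h4 := (div_le_div_iff₀ hε hε).mp h3
    nlinarith
  have hexneg : ∃ i, u i ≤ 0 := by
    by_contra h
    push_neg at h
    have := Finset.sum_pos (fun i (_ : i ∈ univ) => mul_pos (ha i) (h i)) Finset.univ_nonempty
    rw [hu0] at this
    exact lt_irrefl 0 this
  have hexpos : ∃ i, 0 ≤ u i := by
    by_contra h
    push_neg at h
    have := Finset.sum_neg (fun i (_ : i ∈ univ) => mul_neg_of_pos_of_neg (ha i) (h i))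
      Finset.univ_nonempty
    rw [hu0] at this
    exact lt_irrefl 0 this
  obtain ⟨iN, hiN⟩ := hexneg
  obtain ⟨iP, hiP⟩ := hexpos
  have hub : ∀ i, |u i| ≤ 2 * K := by
    intro i
    rw [abs_le]
    constructor
    · linarith [hdiff iP i, hiP]
    · linarith [hdiff i iN, hiN]
  refine ⟨hub, ?_⟩
  -- v bounds
  intro j
  set R : ℝ := ∑ i, Real.exp ((u i - C i j) / ε) * a i with hR
  have hQR : Real.exp (v j / ε) * R = 1 := by
    rw [hR, Finset.mul_sum, ← hQ j]
    refine Finset.sum_congr rfl fun i _ => ?_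
    rw [show u i + v j - C i j = v j + (u i - C i j) by ring, hsplit]
    ring
  have hRub : R ≤ Real.exp (3 * K / ε) := by
    have : R ≤ ∑ i, Real.exp (3 * K / ε) * a i := by
      refine Finset.sum_le_sum fun i _ => ?_
      refine mul_le_mul_of_nonneg_right ?_ (le_of_lt (ha i))
      rw [Real.exp_le_exp, div_le_div_iff₀ hε hε]
      have h1 := abs_le.mp (hub i)
      have h2 := abs_le.mp (hMC i j)
      nlinarith
    rwa [← Finset.mul_sum, ha1, mul_one] at this
  have hRlb : Real.exp (-(3 * K) / ε) ≤ R := by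
    have : (∑ i, Real.exp (-(3 * K) / ε) * a i) ≤ R := by
      refine Finset.sum_le_sum fun i _ => ?_
      refine mul_le_mul_of_nonneg_right ?_ (le_of_lt (ha i))
      rw [Real.exp_le_exp, div_le_div_iff₀ hε hε]
      have h1 := abs_le.mp (hub i)
      have h2 := abs_le.mp (hMC i j)
      nlinarith
    rwa [← Finset.mul_sum, ha1, mul_one] at this
  rw [abs_le]
  constructor
  · have h1 : (1 : ℝ) ≤ Real.exp (v j / ε) * Real.exp (3 * K / ε) := by
      rw [← hQR]
      exact mul_le_mul_of_nonneg_left hRub (le_of_lt (Real.exp_pos _))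
    rw [← Real.exp_add] at h1
    have h2 := Real.one_le_exp_iff.mp h1
    rw [← add_div] at h2
    have h3 : 0 * ε ≤ v j + 3 * K := (le_div_iff₀ hε).mp h2
    linarith
  · have h1 : Real.exp (v j / ε) * Real.exp (-(3 * K) / ε) ≤ 1 := by
      rw [← hQR]
      exact mul_le_mul_of_nonneg_left hRlb (le_of_lt (Real.exp_pos _))
    rw [← Real.exp_add] at h1
    have h2 := Real.exp_le_one_iff.mp h1
    rw [← add_div] at h2
    have h3 : v j + -(3 * K) ≤ 0 * ε := (div_le_iff₀ hε).mp h2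
    linarith
end
end
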